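/- arXiv:1705.09198 — 7 statements merged into one kernel-verified Lean document; each statement's English description precedes it below -/
import Mathlib

section
/- Let Σ be the signature with two unary operation symbols u, v, let A be the free Σ-algebra on one generator x (so A ≅ {u,v}* as a set, acting by prefixing), and let F X = ℕ × X be the endofunctor on Σ-algebras (where ℕ carries the algebra structure with both u and v interpreted as successor). Equip A with the F-coalgebra structure a determined on the generator by a(x) = (0, u(x)). Then the unique F-coalgebra morphism from A to the final F-coalgebra ℕ^ω (streams of naturals with head/tail and pointwise operations) sends u(x) and v(x) to the same stream (1,2,3,4,…), even though u(x) ≠ v(x) in A. -/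
/-!
A stream-valued map satisfying the head and tail equations of a coalgebra `⟨o, t⟩` is forced,
by induction on the index, to be `x ↦ (o (t^[i] x))ᵢ`. Here `t` appends `u` at the end of a word,
so the morphism sends `w` to `(|w| + i)ᵢ`: it only sees the length of a word, and `u x`, `v x`
both have length one.
-/

theorem eq_iterate_of_head_tail {X α : Type*} {o : X → α} {t : X → X} {h : X → ℕ → α}
    (h_head : ∀ x, h x 0 = o x) (h_tail : ∀ x i, h x (i + 1) = h (t x) i) :
    h = fun x i => o (t^[i] x) := by
  funext x i
  induction i generalizing x with
  | zero => exact h_head x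
  | succ i ih => rw [h_tail, ih, Function.iterate_succ_apply]

theorem length_iterate_append_singleton {β : Type*} (b : β) (i : ℕ) (w : List β) :
    ((· ++ [b])^[i] w).length = w.length + i := by
  induction i generalizing w with
  | zero => rfl
  | succ i ih => rw [Function.iterate_succ_apply, ih, List.length_append, List.length_singleton,
      Nat.add_right_comm, Nat.add_assoc]

theorem eq_length_add_of_head_tail {h : List Bool → ℕ → ℕ}
    (h_head : ∀ w : List Bool, h w 0 = w.length)
    (h_tail : ∀ (w : List Bool) (i : ℕ), h w (i + 1) = h (w ++ [true]) i) :
    h = fun w i => w.length + i := by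
  rw [eq_iterate_of_head_tail h_head h_tail]
  simp only [length_iterate_append_singleton]

/-- Words in `List Bool` model the free algebra on `x = []`, with `u = List.cons true` and
`v = List.cons false`; the coalgebra structure is `a w = (|w|, w ++ [true])`. -/
theorem free_coalgebra_morphism_merges_ux_vx :
    (∃! h : List Bool → ℕ → ℕ,
      (∀ (b : Bool) (w : List Bool) (i : ℕ), h (b :: w) i = h w i + 1) ∧
      (∀ w : List Bool, h w 0 = w.length) ∧
      (∀ (w : List Bool) (i : ℕ), h w (i + 1) = h (w ++ [true]) i)) ∧
    (∀ h : List Bool → ℕ → ℕ,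
      ((∀ (b : Bool) (w : List Bool) (i : ℕ), h (b :: w) i = h w i + 1) ∧
       (∀ w : List Bool, h w 0 = w.length) ∧
       (∀ (w : List Bool) (i : ℕ), h w (i + 1) = h (w ++ [true]) i)) →
      h [true] = h [false] ∧ ∀ i : ℕ, h [true] i = i + 1) ∧
    [true] ≠ [false] := by
  refine ⟨⟨fun w i => w.length + i, ⟨?_, fun _ => rfl, ?_⟩,
      fun h ⟨_, h_head, h_tail⟩ => eq_length_add_of_head_tail h_head h_tail⟩, ?_, by simp⟩
  · intro b w i
    simp only [List.length_cons]
    omega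
  · intro w i
    simp only [List.length_append, List.length_singleton]
    omega
  · rintro h ⟨-, h_head, h_tail⟩
    rw [eq_length_add_of_head_tail h_head h_tail]
    exact ⟨rfl, fun i => Nat.add_comm 1 i⟩
end

section
/- With the setup of the previous example (signature with two unary symbols u, v; F X = ℕ × X on Σ-algebras): for any F-coalgebra (B, b) whose carrier B is a finitely presented Σ-algebra and any coalgebra morphism h : A → B from the free coalgebra a(x) = (0, u(x)), one has h(u(x)) ≠ h(v(x)). Consequently the unique coalgebra morphism A → ρF into the rational fixed point (the colimit of all coalgebras with finitely presentable carrier) does not merge u(x) and v(x), so ρF is not a subcoalgebra of the final coalgebra. -/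
/-!
Suppose `h (u x) = h (v x)`. Stepping both sides `n` times with the coalgebra structure gives
`h (u (uⁿ x)) = h (v (uⁿ x))`; writing `h (uⁿ x)` as the class of a term `t`, the terms `u t` and
`v t` are congruent, and their output is `n + 1`. The output `oB` is a homomorphism to the
successor algebra, so on the class of `(w, i)` it equals `|w|` plus a constant bounded over the
finitely many generators. A generating step `w ++ l ~ w ++ r` with `|l|` bounded by the longest
equation in `E` can therefore only touch a term of large output when `w` is nonempty, and then it
keeps the first letter. So for large `n` the congruence cannot identify `u t` with `v t`.
-/

/-- The congruence on the free algebra (with two unary operations given by prefixing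
`true` and `false`) on `k` generators generated by a finite set `E` of pairs of terms:
the equivalence relation generated by applying arbitrary operation words to pairs in `E`. -/
def Cong {k : ℕ} (E : Finset ((List Bool × Fin k) × (List Bool × Fin k))) :
    (List Bool × Fin k) → (List Bool × Fin k) → Prop :=
  Relation.EqvGen (fun p q => ∃ w : List Bool, ∃ e ∈ E,
    p = (w ++ e.1.1, e.1.2) ∧ q = (w ++ e.2.1, e.2.2))

theorem eq_length_add_of_cons {α : Type*} {g : List α → ℕ}
    (hg : ∀ a w, g (a :: w) = g w + 1) (w : List α) : g w = w.length + g [] := by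
  induction w with
  | nil => simp
  | cons a w ih => rw [hg, ih, List.length_cons]; omega

theorem eq_append_replicate_of_eq {α B : Type*} {h : List α → B} {next : B → B} {a : α}
    (hnext : ∀ w, next (h w) = h (w ++ [a])) {w w' : List α} (heq : h w = h w') (n : ℕ) :
    h (w ++ List.replicate n a) = h (w' ++ List.replicate n a) := by
  induction n with
  | zero => simpa using heq
  | succ n ih =>
    rw [List.replicate_succ', ← List.append_assoc, ← List.append_assoc, ← hnext, ← hnext, ih]

theorem Cong.exists_head?_eq {k : ℕ} (E : Finset ((List Bool × Fin k) × (List Bool × Fin k)))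
    (f : List Bool × Fin k → ℕ) (hf : ∀ p p', Cong E p p' → f p = f p')
    (hlen : ∀ p, f p = p.1.length + f ([], p.2)) :
    ∃ N, ∀ p p', Cong E p p' → N < f p → p.1.head? = p'.1.head? := by
  refine ⟨E.sup (fun e => e.1.1.length) + Finset.univ.sup (fun i => f ([], i)),
    fun p p' hc => ?_⟩
  induction hc with
  | rel p p' hr =>
    obtain ⟨w, e, he, rfl, rfl⟩ := hr
    intro hlong
    have hl : e.1.1.length ≤ E.sup (fun e => e.1.1.length) :=
      Finset.le_sup (f := fun e => e.1.1.length) he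
    have hi : f ([], e.1.2) ≤ Finset.univ.sup (fun i => f ([], i)) :=
      Finset.le_sup (f := fun i => f ([], i)) (Finset.mem_univ _)
    have hw : w ≠ [] := by
      rintro rfl
      rw [hlen] at hlong
      simp only [List.nil_append] at hlong
      omega
    obtain ⟨a, w, rfl⟩ := List.exists_cons_of_ne_nil hw
    rfl
  | refl => exact fun _ => rfl
  | symm p p' hc ih => exact fun hlong => (ih (hf _ _ hc ▸ hlong)).symm
  | trans p m p' hpm _ ih₁ ih₂ => exact fun hlong => (ih₁ hlong).trans (ih₂ (hf _ _ hpm ▸ hlong))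

theorem fp_coalgebra_morphism_does_not_merge_ux_vx_general
    (k : ℕ) (E : Finset ((List Bool × Fin k) × (List Bool × Fin k)))
    (B : Type) (uB vB : B → B)
    (q : List Bool × Fin k → B)
    (hq : Function.Surjective q)
    (hqu : ∀ p : List Bool × Fin k, q (true :: p.1, p.2) = uB (q p))
    (hqv : ∀ p : List Bool × Fin k, q (false :: p.1, p.2) = vB (q p))
    (hker : ∀ p p' : List Bool × Fin k, q p = q p' ↔ Cong E p p')
    (oB : B → ℕ) (nB : B → B)
    (hou : ∀ b, oB (uB b) = oB b + 1) (hov : ∀ b, oB (vB b) = oB b + 1)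
    (h : List Bool → B)
    (hhu : ∀ w, h (true :: w) = uB (h w)) (hhv : ∀ w, h (false :: w) = vB (h w))
    (hcoalg_o : ∀ w, oB (h w) = w.length)
    (hcoalg_n : ∀ w, nB (h w) = h (w ++ [true])) :
    h [true] ≠ h [false] := by
  intro heq
  have hlen : ∀ p : List Bool × Fin k, oB (q p) = p.1.length + oB (q ([], p.2)) := by
    rintro ⟨w, i⟩
    refine eq_length_add_of_cons (g := fun w => oB (q (w, i))) (fun a w => ?_) w
    cases a
    · exact (congrArg oB (hqv (w, i))).trans (hov _)
    · exact (congrArg oB (hqu (w, i))).trans (hou _)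
  obtain ⟨N, hN⟩ := Cong.exists_head?_eq E (oB ∘ q)
    (fun p p' hc => congrArg oB ((hker p p').2 hc)) hlen
  obtain ⟨t, ht⟩ := hq (h (List.replicate N true))
  have hcong : Cong E (true :: t.1, t.2) (false :: t.1, t.2) := by
    rw [← hker, hqu, hqv, ht, ← hhu, ← hhv]
    simpa using eq_append_replicate_of_eq hcoalg_n heq N
  have hlong : N < oB (q (true :: t.1, t.2)) := by
    rw [hqu, ht, ← hhu, hcoalg_o]
    simp
  simpa using hN _ _ hcong hlong

/-- Let `B` be a finitely presented algebra for the signature with two unary operations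
`u`, `v`: a quotient of the free algebra on `k` generators via a surjective homomorphism
`q` whose kernel is the congruence generated by a finite set `E`.  Suppose `B` carries a
coalgebra structure for `F X = ℕ × X`, i.e., homomorphisms `oB : B → ℕ` and `nB : B → B`.
Then for any coalgebra morphism `h` from the free coalgebra on one generator `x` with
`a x = (0, u x)` (so `h` is a homomorphism with `oB (h w) = |w|` and
`nB (h w) = h (w ++ [true])`), the elements `h (u x)` and `h (v x)` are distinct.
Hence no coalgebra with finitely presented carrier merges `u x` and `v x`, and the
rational fixed point does not merge them either. -/
theorem fp_coalgebra_morphism_does_not_merge_ux_vx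
    (k : ℕ) (E : Finset ((List Bool × Fin k) × (List Bool × Fin k)))
    (B : Type) (uB vB : B → B)
    (q : List Bool × Fin k → B)
    (hq : Function.Surjective q)
    (hqu : ∀ p : List Bool × Fin k, q (true :: p.1, p.2) = uB (q p))
    (hqv : ∀ p : List Bool × Fin k, q (false :: p.1, p.2) = vB (q p))
    (hker : ∀ p p' : List Bool × Fin k, q p = q p' ↔ Cong E p p')
    (oB : B → ℕ) (nB : B → B)
    (hou : ∀ b, oB (uB b) = oB b + 1) (hov : ∀ b, oB (vB b) = oB b + 1)
    (hnu : ∀ b, nB (uB b) = uB (nB b)) (hnv : ∀ b, nB (vB b) = vB (nB b))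
    (h : List Bool → B)
    (hhu : ∀ w, h (true :: w) = uB (h w)) (hhv : ∀ w, h (false :: w) = vB (h w))
    (hcoalg_o : ∀ w, oB (h w) = w.length)
    (hcoalg_n : ∀ w, nB (h w) = h (w ++ [true])) :
    h [true] ≠ h [false] :=
  fp_coalgebra_morphism_does_not_merge_ux_vx_general k E B uB vB q hq hqu hqv hker oB nB hou hov h
    hhu hhv hcoalg_o hcoalg_n
end

section
/- Let T be a finitary monad on Set and F : Set^T ⥤ Set^T a finitary endofunctor preserving surjective T-algebra morphisms. Then every F-coalgebra whose carrier is a finitely presentable T-algebra is a quotient (via a surjective coalgebra morphism) of an F-coalgebra whose carrier is a free T-algebra on a finite set. -/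
/-!
Free algebras are projective for surjective morphisms: a map from the generators lifts
generator by generator. Hence if `q : T X ↠ A` is surjective, so is `F q`, and the composite
`T X → A → F A` lifts along `F q` to a coalgebra structure on `T X` making `q` a coalgebra
morphism. Such a `q` with `X` finite exists because a finitely presentable algebra is the
directed union of its finitely generated subalgebras, and for finitary `T` this union is a
colimit of algebras, so the identity of `A` factors through one of them.
-/

open CategoryTheory CategoryTheory.Limits

/-- A `T`-algebra is finitely presentable if its hom-functor preserves filtered colimits. -/
def IsFP (T : Monad (Type)) (A : T.Algebra) : Prop :=
  ∀ (J : Type) (_ : SmallCategory J) (_ : IsFiltered J),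
    Nonempty (PreservesColimitsOfShape J (coyoneda.obj (Opposite.op A)))

namespace CategoryTheory.Monad

section Subobject

variable {C : Type*} [Category C] {T : Monad C}

def Algebra.ofMono (A : T.Algebra) {U : C} (m : U ⟶ A.A) [Mono m] (a : T.obj U ⟶ U)
    (ha : a ≫ m = T.map m ≫ A.a) : T.Algebra where
  A := U
  a := a
  unit := by
    rw [← cancel_mono m, Category.assoc, ha, ← T.η.naturality_assoc, A.unit]
    simp
  assoc := by
    rw [← cancel_mono m]
    simp only [Category.assoc, ha, ← T.map_comp_assoc]
    rw [← T.μ.naturality_assoc, A.assoc]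
    simp

def Algebra.ofMonoHom (A : T.Algebra) {U : C} (m : U ⟶ A.A) [Mono m] (a : T.obj U ⟶ U)
    (ha : a ≫ m = T.map m ≫ A.a) : Algebra.ofMono A m a ha ⟶ A where
  f := m
  h := ha.symm

end Subobject

section Types

universe u

variable {T : Monad (Type u)}

theorem free_homEquiv_symm_apply_η {X : Type u} {B : T.Algebra} (v : X ⟶ B.A) (x : X) :
    ((T.adj.homEquiv X B).symm v).f (T.η.app X x) = v x :=
  ConcreteCategory.congr_hom ((T.adj.homEquiv X B).apply_symm_apply v) x

theorem free_exists_lift_of_surjective {X : Type u} {B B' : T.Algebra} (p : B ⟶ B')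
    (hp : Function.Surjective p.f) (g : T.free.obj X ⟶ B') :
    ∃ l : T.free.obj X ⟶ B, l ≫ p = g := by
  choose s hs using fun x => hp (g.f (T.η.app X x))
  refine ⟨(T.adj.homEquiv X B).symm (↾s), (T.adj.homEquiv X B').injective ?_⟩
  rw [Adjunction.homEquiv_naturality_right, Equiv.apply_symm_apply]
  ext x
  exact hs x

namespace Algebra

variable (A : T.Algebra)

def IsClosed (U : Set A.A) : Prop :=
  ∀ t : T.obj U, A.a (T.map (↾Subtype.val) t) ∈ U

theorem isClosed_range {B : T.Algebra} (h : B ⟶ A) : IsClosed A (Set.range h.f) := by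
  intro t
  choose s hs using fun y : Set.range h.f => y.2
  have hval : (↾Subtype.val : ↥(Set.range h.f) ⟶ A.A) = ↾s ≫ h.f := by
    ext y
    exact (hs y).symm
  refine ⟨B.a (T.map (↾s) t), ?_⟩
  rw [hval, T.map_comp]
  exact (ConcreteCategory.congr_hom h.h _).symm

instance (U : Set A.A) : Mono (↾Subtype.val : ↥U ⟶ A.A) :=
  (mono_iff_injective _).2 Subtype.val_injective

def sub {U : Set A.A} (hU : IsClosed A U) : T.Algebra :=
  ofMono A (↾Subtype.val) (↾fun t => ⟨_, hU t⟩) rfl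

def subι {U : Set A.A} (hU : IsClosed A U) : sub A hU ⟶ A :=
  ofMonoHom A (↾Subtype.val) (↾fun t => ⟨_, hU t⟩) rfl

variable {ι : Type u} [Preorder ι] {U : ι → Set A.A}

def subDiagram (hU : ∀ i, IsClosed A (U i)) (hmono : Monotone U) : ι ⥤ T.Algebra where
  obj i := sub A (hU i)
  map {i j} f :=
    { f := ↾Set.inclusion (hmono (leOfHom f))
      h := by
        ext t
        apply Subtype.ext
        exact congrArg A.a (ConcreteCategory.congr_hom (T.map_comp
          (↾Set.inclusion (hmono (leOfHom f))) (↾(Subtype.val : U j → A.A))) t).symm }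

def subCocone (hU : ∀ i, IsClosed A (U i)) (hmono : Monotone U) :
    Cocone (subDiagram A hU hmono) where
  pt := A
  ι := { app i := subι A (hU i) }

/-- A directed union of subalgebras covering `A` is a colimit of algebras: it is one of sets,
and the forgetful functor creates the colimits that `T` preserves. -/
noncomputable def isColimitSubCocone [IsFilteredOrEmpty ι]
    [PreservesColimitsOfShape ι (T : Type u ⥤ Type u)]
    (hU : ∀ i, IsClosed A (U i)) (hmono : Monotone U) (hcover : ∀ a, ∃ i, a ∈ U i) :
    IsColimit (subCocone A hU hmono) :=
  isColimitOfReflects T.forget <| Types.FilteredColimit.isColimitOf' _ _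
    (fun a => ⟨(hcover a).choose, ⟨a, (hcover a).choose_spec⟩, rfl⟩)
    (fun i _ _ h => ⟨i, 𝟙 i, by rw [Functor.map_id]; exact Subtype.ext h⟩)

end Algebra

end Types

end CategoryTheory.Monad

open CategoryTheory.Monad

theorem IsFP.exists_section {T : Monad Type} {J : Type} [SmallCategory J] [IsFiltered J]
    {D : J ⥤ T.Algebra} {c : Cocone D} (hc : IsColimit c) (hA : IsFP T c.pt) :
    ∃ (j : J) (r : c.pt ⟶ D.obj j), r ≫ c.ι.app j = 𝟙 c.pt := by
  obtain ⟨_⟩ := hA J inferInstance inferInstance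
  exact Types.jointly_surjective _
    (isColimitOfPreserves (coyoneda.obj (Opposite.op c.pt)) hc) (𝟙 c.pt)

theorem IsFP.exists_surjective_free {T : Monad Type}
    [PreservesFilteredColimits (T : Type ⥤ Type)] {A : T.Algebra} (hA : IsFP T A) :
    ∃ (X : Type) (_ : Finite X) (q : T.free.obj X ⟶ A), Function.Surjective q.f := by
  let gen (S : Finset A.A) : T.free.obj S ⟶ A := (T.adj.homEquiv S A).symm (↾Subtype.val)
  have hmono : Monotone fun S => Set.range (gen S).f := by
    intro S S' hS
    have hgen : gen S = T.free.map (↾Set.inclusion hS) ≫ gen S' :=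
      T.adj.homEquiv_naturality_left_symm (↾Set.inclusion hS) (↾Subtype.val)
    change Set.range (gen S).f ⊆ Set.range (gen S').f
    rw [hgen]
    rintro _ ⟨x, rfl⟩
    exact ⟨_, rfl⟩
  have hcover (a : A.A) : ∃ S, a ∈ Set.range (gen S).f :=
    ⟨{a}, T.η.app _ ⟨a, Finset.mem_singleton_self a⟩, free_homEquiv_symm_apply_η _ _⟩
  obtain ⟨S, r, hr⟩ := IsFP.exists_section
    (Algebra.isColimitSubCocone A (fun S => Algebra.isClosed_range A (gen S)) hmono hcover) hA
  refine ⟨S, inferInstance, gen S, fun a => ?_⟩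
  have hra : (r.f a).1 = a := by exact ConcreteCategory.congr_hom (congrArg Algebra.Hom.f hr) a
  exact (r.f a).2.imp fun _ h => h.trans hra

theorem exists_coalgebra_hom_of_free {T : Monad Type} {F : T.Algebra ⥤ T.Algebra}
    (C : Endofunctor.Coalgebra F) {X : Type} (q : T.free.obj X ⟶ C.V)
    (hq : Function.Surjective (F.map q).f) :
    ∃ (c : T.free.obj X ⟶ F.obj (T.free.obj X))
      (h : (⟨T.free.obj X, c⟩ : Endofunctor.Coalgebra F) ⟶ C), h.f = q := by
  obtain ⟨c, hc⟩ := free_exists_lift_of_surjective (F.map q) hq (q ≫ C.str)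
  exact ⟨c, ⟨q, hc⟩, rfl⟩

theorem fp_coalgebra_quotient_of_free_general
    (T : Monad (Type)) [PreservesFilteredColimits (T : Type ⥤ Type)]
    (F : T.Algebra ⥤ T.Algebra)
    (hsurj : ∀ {A B : T.Algebra} (f : A ⟶ B), Function.Surjective f.f →
      Function.Surjective (F.map f).f)
    (C : Endofunctor.Coalgebra F) (hC : IsFP T C.V) :
    ∃ (X : Type) (_ : Finite X) (c : T.free.obj X ⟶ F.obj (T.free.obj X))
      (q : (⟨T.free.obj X, c⟩ : Endofunctor.Coalgebra F) ⟶ C),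
      Function.Surjective q.f.f := by
  obtain ⟨X, hX, q, hq⟩ := hC.exists_surjective_free
  obtain ⟨c, h, rfl⟩ := exists_coalgebra_hom_of_free C q (hsurj q hq)
  exact ⟨X, hX, c, h, hq⟩

/-- For a finitary monad `T` on `Set` and a finitary endofunctor `F` on `Set^T`
preserving surjective algebra morphisms, every `F`-coalgebra with finitely presentable
carrier is a surjective quotient of an `F`-coalgebra carried by a free algebra on a
finite set. -/
theorem fp_coalgebra_quotient_of_free
    (T : Monad (Type)) [PreservesFilteredColimits (T : Type ⥤ Type)]
    (F : T.Algebra ⥤ T.Algebra) [PreservesFilteredColimits F]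
    (hsurj : ∀ {A B : T.Algebra} (f : A ⟶ B), Function.Surjective f.f →
      Function.Surjective (F.map f).f)
    (C : Endofunctor.Coalgebra F) (hC : IsFP T C.V) :
    ∃ (X : Type) (_ : Finite X) (c : T.free.obj X ⟶ F.obj (T.free.obj X))
      (q : (⟨T.free.obj X, c⟩ : Endofunctor.Coalgebra F) ⟶ C),
      Function.Surjective q.f.f :=
  fp_coalgebra_quotient_of_free_general T F hsurj C hC
end

section
/- Let T be a finitary monad on Set and F : Set^T ⥤ Set^T a finitary endofunctor preserving surjective T-algebra morphisms. Let φF be the colimit of the inclusion of the full subcategory of F-coalgebras with free finitely generated carrier, and ρF the colimit of the inclusion of F-coalgebras with finitely presentable carrier. Then the canonical coalgebra morphism h : φF → ρF induced by the inclusion of diagrams is a strong epimorphism (i.e., surjective). -/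
open CategoryTheory CategoryTheory.Limits

/-- An `F`-coalgebra has free finitely generated carrier. -/
def Pffg (T : Monad (Type)) (F : T.Algebra ⥤ T.Algebra)
    (C : Endofunctor.Coalgebra F) : Prop :=
  ∃ X : Type, Finite X ∧ Nonempty (C.V ≅ T.free.obj X)

/-- An `F`-coalgebra has finitely presentable carrier. -/
def Pfp (T : Monad (Type)) (F : T.Algebra ⥤ T.Algebra)
    (C : Endofunctor.Coalgebra F) : Prop :=
  IsFP T C.V

namespace CanonAux

open Function

set_option linter.unusedSectionVars false

attribute [local instance] Classical.propDecidable

variable (T : Monad (Type))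

lemma tmap_tmap {X Y Z : Type} (f : X ⟶ Y) (g : Y ⟶ Z) (x : (T : Type ⥤ Type).obj X) :
    (T : Type ⥤ Type).map g ((T : Type ⥤ Type).map f x)
      = (T : Type ⥤ Type).map (↾fun a => g (f a)) x := by
  rw [← Functor.map_comp_apply]
  rfl

lemma tmap_id {X : Type} (x : (T : Type ⥤ Type).obj X) :
    (T : Type ⥤ Type).map (↾fun a => a) x = x := by
  have : (fun a : X => a) = 𝟙 X := rfl
  rw [this]
  simp

lemma tmap_congr {X Y : Type} {f g : X → Y} (h : ∀ x, f x = g x) (x : (T : Type ⥤ Type).obj X) :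
    (T : Type ⥤ Type).map (↾f) x = (T : Type ⥤ Type).map (↾g) x := by
  have : f = g := funext h
  rw [this]

lemma tmap_surjective {X Y : Type} (f : X ⟶ Y) (hf : Surjective f) :
    Surjective ((T : Type ⥤ Type).map f) := by
  classical
  intro t
  refine ⟨(T : Type ⥤ Type).map (↾(surjInv hf)) t, ?_⟩
  rw [tmap_tmap]
  rw [tmap_congr T (fun y => surjInv_eq hf y)]
  exact tmap_id T t

-- pointwise form of the algebra morphism condition
lemma hom_h {A B : T.Algebra} (u : A ⟶ B) (t : (T : Type ⥤ Type).obj A.A) :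
    B.a ((T : Type ⥤ Type).map u.f t) = u.f (A.a t) := by
  have := ConcreteCategory.congr_hom u.h t
  exact this

lemma unit_pt {A : T.Algebra} (x : A.A) : A.a (T.η.app A.A x) = x := ConcreteCategory.congr_hom A.unit x

lemma assoc_pt {A : T.Algebra} (w : (T : Type ⥤ Type).obj ((T : Type ⥤ Type).obj A.A)) :
    A.a (T.μ.app A.A w) = A.a ((T : Type ⥤ Type).map A.a w) := by
  have := ConcreteCategory.congr_hom A.assoc w
  exact this

lemma μ_nat {X Y : Type} (f : X → Y) (w : (T : Type ⥤ Type).obj ((T : Type ⥤ Type).obj X)) :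
    T.μ.app Y ((T : Type ⥤ Type).map ((T : Type ⥤ Type).map (↾f)) w)
      = (T : Type ⥤ Type).map (↾f) (T.μ.app X w) := by
  have := ConcreteCategory.congr_hom (T.μ.naturality (↾f)) w
  simpa using this

lemma η_nat {X Y : Type} (f : X → Y) (x : X) :
    T.η.app Y (f x) = (T : Type ⥤ Type).map (↾f) (T.η.app X x) := by
  have := ConcreteCategory.congr_hom (T.η.naturality (↾f)) x
  simpa using this

lemma right_unit_pt {X : Type} (t : (T : Type ⥤ Type).obj X) :
    T.μ.app X ((T : Type ⥤ Type).map (T.η.app X) t) = t := ConcreteCategory.congr_hom (T.right_unit X) t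

/-- extension of a function to an algebra morphism from the free algebra -/
def freeExt {X : Type} {B : T.Algebra} (g : X → B.A) : T.free.obj X ⟶ B where
  f := ↾fun (t : (T : Type ⥤ Type).obj X) => B.a ((T : Type ⥤ Type).map (↾g) t)
  h := by
    refine ConcreteCategory.hom_ext _ _ fun w => ?_
    show B.a ((T : Type ⥤ Type).map _ w) = B.a ((T : Type ⥤ Type).map (↾g) (T.μ.app X w))
    erw [← μ_nat, assoc_pt, tmap_tmap]
    rfl

@[simp] lemma freeExt_η {X : Type} {B : T.Algebra} (g : X → B.A) (x : X) :
    (freeExt T g).f (T.η.app X x) = g x := by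
  show B.a ((T : Type ⥤ Type).map (↾g) (T.η.app X x)) = g x
  rw [← η_nat, unit_pt]

lemma free_f_eq {X : Type} {B : T.Algebra} (u : T.free.obj X ⟶ B)
    (t : (T : Type ⥤ Type).obj X) :
    u.f t = B.a ((T : Type ⥤ Type).map (↾fun x => u.f (T.η.app X x)) t) := by
  conv_lhs => rw [← right_unit_pt T t]
  have hw := hom_h T u ((T : Type ⥤ Type).map (T.η.app X) t)
  have hfree : (T.free.obj X).a = T.μ.app X := rfl
  rw [show u.f (T.μ.app X ((T : Type ⥤ Type).map (T.η.app X) t))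
      = u.f ((T.free.obj X).a ((T : Type ⥤ Type).map (T.η.app X) t)) from rfl, ← hw]
  erw [tmap_tmap]

lemma free_hom_ext {X : Type} {B : T.Algebra} (u v : T.free.obj X ⟶ B)
    (h : ∀ x, u.f (T.η.app X x) = v.f (T.η.app X x)) : u = v := by
  apply Monad.Algebra.Hom.ext
  refine ConcreteCategory.hom_ext _ _ fun (t : (T : Type ⥤ Type).obj X) => ?_
  rw [free_f_eq T u, free_f_eq T v, tmap_congr T h]

-- ## Block 2: congruences and quotient algebras
def IsCong (M : T.Algebra) (r : Setoid M.A) : Prop :=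
  ∀ p : (T : Type ⥤ Type).obj {xy : M.A × M.A // r.r xy.1 xy.2},
    r.r (M.a ((T : Type ⥤ Type).map (↾fun q => q.1.1) p))
        (M.a ((T : Type ⥤ Type).map (↾fun q => q.1.2) p))

lemma ker_isCong {M B : T.Algebra} (u : M ⟶ B) : IsCong T M (Setoid.ker u.f) := by
  intro p
  show u.f (M.a _) = u.f (M.a _)
  rw [← hom_h T u, ← hom_h T u]
  exact congrArg B.a (by rw [tmap_tmap, tmap_tmap]; exact tmap_congr T (fun q => q.2) p)

variable {T}
variable (M : T.Algebra) (r : Setoid M.A)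

noncomputable def preT : (T : Type ⥤ Type).obj (Quotient r) → (T : Type ⥤ Type).obj M.A :=
  surjInv (tmap_surjective T (↾(Quotient.mk r)) Quotient.mk_surjective)

lemma preT_spec (z : (T : Type ⥤ Type).obj (Quotient r)) :
    (T : Type ⥤ Type).map (↾(Quotient.mk r)) (preT M r z) = z :=
  surjInv_eq _ z

lemma cong_sound (hr : IsCong T M r) {t t' : (T : Type ⥤ Type).obj M.A}
    (h : (T : Type ⥤ Type).map (↾(Quotient.mk r)) t = (T : Type ⥤ Type).map (↾(Quotient.mk r)) t') :
    r.r (M.a t) (M.a t') := by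
  classical
  set sec : Quotient r → M.A := surjInv (Quotient.mk_surjective) with hsec
  have hsec' : ∀ q, Quotient.mk r (sec q) = q := fun q => surjInv_eq _ q
  set w : M.A → M.A := fun x => sec (Quotient.mk r x) with hw
  have hrel : ∀ x, r.r x (w x) := by
    intro x
    exact Quotient.exact (hsec' (Quotient.mk r x)).symm
  have step : ∀ s : (T : Type ⥤ Type).obj M.A,
      r.r (M.a s) (M.a ((T : Type ⥤ Type).map (↾w) s)) := by
    intro s
    have := hr ((T : Type ⥤ Type).map
      (↾fun x => (⟨(x, w x), hrel x⟩ : {xy : M.A × M.A // r.r xy.1 xy.2})) s)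
    rw [tmap_tmap, tmap_tmap] at this
    simpa [tmap_id] using this
  have key : (T : Type ⥤ Type).map (↾w) t = (T : Type ⥤ Type).map (↾w) t' := by
    rw [hw]
    rw [show (fun x => sec (Quotient.mk r x)) = fun x => sec (Quotient.mk r x) from rfl]
    have e1 : ∀ s, (T : Type ⥤ Type).map (↾fun x => sec (Quotient.mk r x)) s
        = (T : Type ⥤ Type).map (↾sec) ((T : Type ⥤ Type).map (↾(Quotient.mk r)) s) := by
      intro s; rw [tmap_tmap]
    rw [e1, e1, h]
  exact Setoid.trans (step t) (by rw [key]; exact Setoid.symm (step t'))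

noncomputable def quotMap : (T : Type ⥤ Type).obj (Quotient r) → Quotient r :=
  fun z => Quotient.mk r (M.a (preT M r z))

lemma quotMap_mk (hr : IsCong T M r) (t : (T : Type ⥤ Type).obj M.A) :
    quotMap M r ((T : Type ⥤ Type).map (↾(Quotient.mk r)) t) = Quotient.mk r (M.a t) :=
  Quotient.sound (cong_sound M r hr (preT_spec M r _))

variable (hr : IsCong T M r)

noncomputable def quotAlg : T.Algebra where
  A := Quotient r
  a := ↾(quotMap M r)
  unit := by
    refine ConcreteCategory.hom_ext _ _ fun z => ?_
    induction z using Quotient.ind with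
    | _ x =>
      show quotMap M r (T.η.app _ (Quotient.mk r x)) = Quotient.mk r x
      rw [η_nat, quotMap_mk M r hr, unit_pt]
  assoc := by
    refine ConcreteCategory.hom_ext _ _ fun w' => ?_
    obtain ⟨w, rfl⟩ := tmap_surjective T ((T : Type ⥤ Type).map (↾(Quotient.mk r)))
      (tmap_surjective T (↾(Quotient.mk r)) Quotient.mk_surjective) w'
    show quotMap M r (T.μ.app _ _) = quotMap M r ((T : Type ⥤ Type).map (↾(quotMap M r)) _)
    rw [μ_nat, quotMap_mk M r hr, assoc_pt]
    conv_rhs => rw [tmap_tmap, tmap_congr T (fun x => quotMap_mk M r hr x),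
      ← tmap_tmap T M.a (↾(Quotient.mk r)) w, quotMap_mk M r hr]

noncomputable def quotProj : M ⟶ quotAlg M r hr where
  f := ↾(Quotient.mk r)
  h := ConcreteCategory.hom_ext _ _ fun t => quotMap_mk M r hr t

@[simp] lemma quotProj_f (x : M.A) : (quotProj M r hr).f x = Quotient.mk r x := rfl

noncomputable def quotDesc {B : T.Algebra} (u : M ⟶ B) (hu : ∀ x y, r.r x y → u.f x = u.f y) :
    quotAlg M r hr ⟶ B where
  f := ↾(Quotient.lift u.f hu)
  h := by
    refine ConcreteCategory.hom_ext _ _ fun z => ?_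
    obtain ⟨t, rfl⟩ := tmap_surjective T (↾(Quotient.mk r)) Quotient.mk_surjective z
    show B.a ((T : Type ⥤ Type).map _ ((T : Type ⥤ Type).map (↾(Quotient.mk r)) t)) = _
    erw [tmap_tmap]
    show B.a ((T : Type ⥤ Type).map (↾fun a => u.f a) t)
        = Quotient.lift u.f hu (quotMap M r ((T : Type ⥤ Type).map (↾(Quotient.mk r)) t))
    rw [quotMap_mk M r hr]
    show B.a ((T : Type ⥤ Type).map (↾fun a => u.f a) t) = u.f (M.a t)
    rw [← hom_h T u]
    rfl

@[simp] lemma quotDesc_mk {B : T.Algebra} (u : M ⟶ B) (hu : ∀ x y, r.r x y → u.f x = u.f y)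
    (x : M.A) : (quotDesc M r hr u hu).f (Quotient.mk r x) = u.f x := rfl

lemma quot_hom_ext {B : T.Algebra} (u v : quotAlg M r hr ⟶ B)
    (h : ∀ x, u.f (Quotient.mk r x) = v.f (Quotient.mk r x)) : u = v := by
  apply Monad.Algebra.Hom.ext
  refine ConcreteCategory.hom_ext _ _ fun z => ?_
  induction z using Quotient.ind with
  | _ x => exact h x


-- ## Block 3: every type is the filtered colimit of its finite subsets
section FinColim
variable (Y : Type)

def finsetDiag : Finset Y ⥤ Type where
  obj S := {y : Y // y ∈ S}
  map {S S'} u := ↾fun p => ⟨p.1, leOfHom u p.2⟩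

def finsetCocone : Cocone (finsetDiag Y) where
  pt := Y
  ι := { app := fun S => ↾fun p => p.1 }

def finsetIsColimit : IsColimit (finsetCocone Y) where
  desc s := ↾fun y => s.ι.app {y} ⟨y, Finset.mem_singleton_self y⟩
  fac s S := by
    refine ConcreteCategory.hom_ext _ _ fun p => ?_
    have h1 := ConcreteCategory.congr_hom (s.w (homOfLE (Finset.singleton_subset_iff.mpr
      (Finset.mem_insert_self p.1 S)) : ({p.1} : Finset Y) ⟶ insert p.1 S))
      ⟨p.1, Finset.mem_singleton_self p.1⟩
    have h2 := ConcreteCategory.congr_hom (s.w (homOfLE (Finset.subset_insert p.1 S) : S ⟶ insert p.1 S)) p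
    show s.ι.app {p.1} ⟨p.1, _⟩ = s.ι.app S p
    rw [← h1, ← h2]
    rfl
  uniq s m w := by
    refine ConcreteCategory.hom_ext _ _ fun y => ?_
    exact ConcreteCategory.congr_hom (w {y}) ⟨y, Finset.mem_singleton_self y⟩

variable {Y}

lemma finitary [PreservesFilteredColimits (T : Type ⥤ Type)] (t : (T : Type ⥤ Type).obj Y) :
    ∃ (S : Finset Y) (t₀ : (T : Type ⥤ Type).obj {y : Y // y ∈ S}),
      (T : Type ⥤ Type).map (↾fun p => p.1) t₀ = t := by
  have hc := isColimitOfPreserves (T : Type ⥤ Type) (finsetIsColimit Y)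
  obtain ⟨S, y, hy⟩ := Types.jointly_surjective _ hc t
  exact ⟨S, y, hy⟩

end FinColim

-- ## Block 4: every fp algebra is a quotient of a free finitely generated algebra
section Cover
variable [PreservesFilteredColimits (T : Type ⥤ Type)] (A : T.Algebra)

noncomputable def epsAlg (S : Finset A.A) : T.free.obj {x : A.A // x ∈ S} ⟶ A :=
  freeExt T (fun p => p.1)

noncomputable def fgQuot (S : Finset A.A) : T.Algebra :=
  quotAlg (T.free.obj {x : A.A // x ∈ S}) (Setoid.ker (epsAlg A S).f) (ker_isCong T _)

noncomputable def fgProj (S : Finset A.A) : T.free.obj {x : A.A // x ∈ S} ⟶ fgQuot A S :=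
  quotProj _ _ _

noncomputable def fgInto (S : Finset A.A) : fgQuot A S ⟶ A :=
  quotDesc _ _ _ (epsAlg A S) (fun _ _ h => h)

lemma fgInto_proj (S : Finset A.A) (t : (T : Type ⥤ Type).obj {x : A.A // x ∈ S}) :
    (fgInto A S).f ((fgProj A S).f t) = (epsAlg A S).f t := rfl

lemma eps_nat {S S' : Finset A.A} (u : S ⟶ S') (t : (T : Type ⥤ Type).obj {x : A.A // x ∈ S}) :
    (epsAlg A S').f ((T : Type ⥤ Type).map (↾fun p => (⟨p.1, leOfHom u p.2⟩ :
      {x : A.A // x ∈ S'})) t) = (epsAlg A S).f t := by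
  show A.a ((T : Type ⥤ Type).map _ ((T : Type ⥤ Type).map _ t)) = A.a _
  rw [tmap_tmap]

noncomputable def fgMap {S S' : Finset A.A} (u : S ⟶ S') : fgQuot A S ⟶ fgQuot A S' :=
  quotDesc _ _ _
    (T.free.map (↾fun p => (⟨p.1, leOfHom u p.2⟩ : {x : A.A // x ∈ S'})) ≫ fgProj A S')
    (fun x y h => Quotient.sound (show (epsAlg A S').f _ = (epsAlg A S').f _ by
      show (epsAlg A S').f ((T : Type ⥤ Type).map _ x) = (epsAlg A S').f ((T : Type ⥤ Type).map _ y)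
      rw [eps_nat A u x, eps_nat A u y]; exact h))

lemma fgMap_mk {S S' : Finset A.A} (u : S ⟶ S') (t : (T : Type ⥤ Type).obj {x : A.A // x ∈ S}) :
    (fgMap A u).f ((fgProj A S).f t) = (fgProj A S').f
      ((T : Type ⥤ Type).map (↾fun p => (⟨p.1, leOfHom u p.2⟩ : {x : A.A // x ∈ S'})) t) := rfl

noncomputable def fgDiag : Finset A.A ⥤ T.Algebra where
  obj S := fgQuot A S
  map u := fgMap A u
  map_id S := by
    apply quot_hom_ext _ _ (ker_isCong T _)
    intro x
    show (fgProj A S).f ((T : Type ⥤ Type).map _ x) = (fgProj A S).f x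
    exact congrArg (fgProj A S).f
      (by exact tmap_id T x)
  map_comp {S S' S''} u v := by
    apply quot_hom_ext _ _ (ker_isCong T _)
    intro (x : (T : Type ⥤ Type).obj {x : A.A // x ∈ S})
    show (fgProj A S'').f ((T : Type ⥤ Type).map _ x)
        = (fgMap A v).f ((fgMap A u).f ((fgProj A S).f x))
    rw [fgMap_mk, fgMap_mk, tmap_tmap]

noncomputable def fgCocone : Cocone (fgDiag A) where
  pt := A
  ι :=
    { app := fun S => fgInto A S
      naturality := fun S S' u => by
        apply quot_hom_ext _ _ (ker_isCong T _)
        intro x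
        show (fgInto A S').f ((fgMap A u).f ((fgProj A S).f x)) = _
        erw [fgMap_mk]
        show (epsAlg A S').f _ = (fgInto A S ≫ ((Functor.const (Finset A.A)).obj A).map u).f
          ((fgProj A S).f x)
        rw [eps_nat A u x]
        rfl }

noncomputable def descFun (s : Cocone (fgDiag A)) : A.A → s.pt.A :=
  fun a => (s.ι.app {a}).f ((fgProj A {a}).f (T.η.app _ ⟨a, Finset.mem_singleton_self a⟩))

lemma fgKey (s : Cocone (fgDiag A)) (S : Finset A.A)
    (t : (T : Type ⥤ Type).obj {x : A.A // x ∈ S}) :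
    descFun A s ((epsAlg A S).f t) = (s.ι.app S).f ((fgProj A S).f t) := by
  set a := (epsAlg A S).f t with ha
  have u1 : ({a} : Finset A.A) ⟶ insert a S :=
    homOfLE (Finset.singleton_subset_iff.mpr (Finset.mem_insert_self a S))
  have u2 : S ⟶ insert a S := homOfLE (Finset.subset_insert a S)
  have w1 := ConcreteCategory.congr_hom (congrArg Monad.Algebra.Hom.f (s.w u1))
    ((fgProj A {a}).f (T.η.app _ ⟨a, Finset.mem_singleton_self a⟩))
  have w2 := ConcreteCategory.congr_hom (congrArg Monad.Algebra.Hom.f (s.w u2)) ((fgProj A S).f t)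
  show descFun A s a = _
  have e1 : descFun A s a = (s.ι.app (insert a S)).f ((fgMap A u1).f
      ((fgProj A {a}).f (T.η.app _ ⟨a, Finset.mem_singleton_self a⟩))) := w1.symm
  have e2 : (s.ι.app S).f ((fgProj A S).f t)
      = (s.ι.app (insert a S)).f ((fgMap A u2).f ((fgProj A S).f t)) := w2.symm
  rw [e1, e2, fgMap_mk, fgMap_mk]
  refine congrArg (s.ι.app (insert a S)).f (Quotient.sound ?_)
  show (epsAlg A (insert a S)).f _ = (epsAlg A (insert a S)).f _
  rw [eps_nat A u2 t, ← ha]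
  show (epsAlg A (insert a S)).f ((T : Type ⥤ Type).map _ (T.η.app _ _)) = a
  rw [← η_nat T]
  exact freeExt_η T _ _

noncomputable def fgIsColimit : IsColimit (fgCocone A) where
  desc s :=
    { f := ↾(descFun A s)
      h := by
        show (T : Type ⥤ Type).map (↾(descFun A s)) ≫ s.pt.a = A.a ≫ ↾(descFun A s)
        refine ConcreteCategory.hom_ext _ _ fun t => ?_
        obtain ⟨S, t₀, rfl⟩ := finitary (T := T) t
        show s.pt.a ((T : Type ⥤ Type).map (↾(descFun A s)) _) = descFun A s (A.a _)
        have hrhs : A.a ((T : Type ⥤ Type).map (↾fun p => p.1) t₀) = (epsAlg A S).f t₀ := rfl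
        rw [hrhs, fgKey A s S t₀, tmap_tmap]
        have hd : ∀ p : {x : A.A // x ∈ S}, descFun A s p.1
            = (s.ι.app S).f ((fgProj A S).f (T.η.app _ p)) := by
          intro p
          have : p.1 = (epsAlg A S).f (T.η.app _ p) := (freeExt_η T _ _).symm
          rw [this, fgKey A s S]
        rw [tmap_congr T hd]
        have e1 : (T : Type ⥤ Type).map (↾fun p : {x : A.A // x ∈ S} =>
            (s.ι.app S).f ((fgProj A S).f (T.η.app _ p))) t₀
            = (T : Type ⥤ Type).map ((s.ι.app S).f)
              ((T : Type ⥤ Type).map (↾fun p => (fgProj A S).f (T.η.app _ p)) t₀) :=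
          (tmap_tmap T (↾fun p => (fgProj A S).f (T.η.app _ p)) (s.ι.app S).f t₀).symm
        rw [e1]
        refine Eq.trans (hom_h T (s.ι.app S) _) ?_
        refine congrArg (s.ι.app S).f ?_
        show (fgQuot A S).a ((T : Type ⥤ Type).map
          (↾fun p : {x : A.A // x ∈ S} => (fgProj A S).f (T.η.app _ p)) t₀) = (fgProj A S).f t₀
        have e2 : (T : Type ⥤ Type).map (↾fun p : {x : A.A // x ∈ S} =>
            (fgProj A S).f (T.η.app _ p)) t₀
            = (T : Type ⥤ Type).map ((fgProj A S).f)
              ((T : Type ⥤ Type).map (T.η.app _) t₀) :=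
          (tmap_tmap T (T.η.app _) (fgProj A S).f t₀).symm
        rw [e2]
        show quotMap _ _ ((T : Type ⥤ Type).map (↾(Quotient.mk _)) _) = _
        erw [quotMap_mk _ _ (ker_isCong T _)]
        show Quotient.mk _ (T.μ.app _ ((T : Type ⥤ Type).map (T.η.app _) t₀)) = _
        rw [right_unit_pt T t₀]
        rfl }
  fac s S := by
    apply quot_hom_ext _ _ (ker_isCong T _)
    intro x
    show descFun A s ((fgInto A S).f (Quotient.mk _ x)) = (s.ι.app S).f (Quotient.mk _ x)
    show descFun A s ((epsAlg A S).f x) = _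
    rw [fgKey A s S x]
    rfl
  uniq s m w := by
    apply Monad.Algebra.Hom.ext
    refine ConcreteCategory.hom_ext _ _ fun a => ?_
    have h0 : (fgInto A {a}).f ((fgProj A {a}).f
        (T.η.app _ ⟨a, Finset.mem_singleton_self a⟩)) = a := by
      rw [fgInto_proj]
      exact freeExt_η T _ _
    have hw := ConcreteCategory.congr_hom (congrArg Monad.Algebra.Hom.f (w {a}))
      ((fgProj A {a}).f (T.η.app _ ⟨a, Finset.mem_singleton_self a⟩))
    show m.f a = descFun A s a
    conv_lhs => rw [← h0]
    exact hw

theorem exists_cover [PreservesFilteredColimits (T : Type ⥤ Type)]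
    (hA : ∀ (J : Type) (_ : SmallCategory J) (_ : IsFiltered J),
      Nonempty (PreservesColimitsOfShape J (coyoneda.obj (Opposite.op A)))) :
    ∃ S : Finset A.A, Surjective (epsAlg A S).f := by
  obtain ⟨pres⟩ := hA (Finset A.A) inferInstance inferInstance
  have hc := isColimitOfPreserves (coyoneda.obj (Opposite.op A)) (fgIsColimit A)
  obtain ⟨S, w, hw⟩ := Types.jointly_surjective _ hc (𝟙 A)
  refine ⟨S, fun a => ?_⟩
  obtain ⟨t, ht⟩ := Quotient.exists_rep (w.f a)
  refine ⟨t, ?_⟩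
  have h1 : (epsAlg A S).f t = (fgInto A S).f (w.f a) := by rw [← ht]; rfl
  have h2 : (fgInto A S).f (w.f a) = a := by
    have := ConcreteCategory.congr_hom (congrArg Monad.Algebra.Hom.f hw) a
    exact this
  rw [h1, h2]

end Cover

-- ## Block 5: free algebras on finite carriers are finitely presentable
section FreeFP

lemma coyonedaFinitePreserves (X : Type) [Finite X] (J : Type) [SmallCategory J]
    [IsFiltered J] : PreservesColimitsOfShape J (coyoneda.obj (Opposite.op X) : Type ⥤ Type) := by
  classical
  have : Fintype X := Fintype.ofFinite X
  constructor
  intro K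
  constructor
  intro c hc
  constructor
  have cw : ∀ {i k : J} (m : i ⟶ k) (z : K.obj i),
      c.ι.app k (K.map m z) = c.ι.app i z := by
    intro i k m z
    have := ConcreteCategory.congr_hom (c.w m) z
    simpa using this
  apply Types.FilteredColimit.isColimitOf
  · -- joint surjectivity
    intro (x : X ⟶ c.pt)
    have hx : ∀ p : X, ∃ j y, c.ι.app j y = x p := fun p => Types.jointly_surjective _ hc (x p)
    choose jf yf hyf using hx
    obtain ⟨S, hS⟩ := IsFiltered.sup_objs_exists (Finset.image jf Finset.univ)
    have harr : ∀ p : X, jf p ⟶ S := fun p =>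
      Classical.choice (hS (Finset.mem_image_of_mem jf (Finset.mem_univ p)))
    refine ⟨S, ↾fun p => K.map (harr p) (yf p), ?_⟩
    refine ConcreteCategory.hom_ext _ _ fun p => ?_
    show x p = c.ι.app S (K.map (harr p) (yf p))
    rw [cw (harr p) (yf p), hyf p]
  · -- joint injectivity
    intro i j (xi : X ⟶ K.obj i) (xj : X ⟶ K.obj j) heq
    set k₀ := IsFiltered.max i j with hk₀
    set u := IsFiltered.leftToMax i j
    set v := IsFiltered.rightToMax i j
    set a : X → K.obj k₀ := fun p => K.map u (xi p) with ha
    set b : X → K.obj k₀ := fun p => K.map v (xj p) with hb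
    have hab : ∀ p, c.ι.app k₀ (a p) = c.ι.app k₀ (b p) := by
      intro p
      have h3 := ConcreteCategory.congr_hom heq p
      show c.ι.app k₀ (K.map u (xi p)) = c.ι.app k₀ (K.map v (xj p))
      rw [cw u (xi p), cw v (xj p)]
      exact h3
    have key : ∀ s : Finset X, ∃ (k : J) (m : k₀ ⟶ k),
        ∀ p ∈ s, K.map m (a p) = K.map m (b p) := by
      intro s
      induction s using Finset.induction_on with
      | empty => exact ⟨k₀, 𝟙 k₀, by simp⟩
      | @insert q s hq ih =>
        obtain ⟨k, m, hm⟩ := ih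
        have hq2 : c.ι.app k (K.map m (a q)) = c.ι.app k (K.map m (b q)) := by
          rw [cw m (a q), cw m (b q)]
          exact hab q
        obtain ⟨k', f, g', hfg⟩ := (Types.FilteredColimit.isColimit_eq_iff _ hc).mp hq2
        refine ⟨IsFiltered.coeq f g', m ≫ f ≫ IsFiltered.coeqHom f g', ?_⟩
        intro p hp
        rcases Finset.mem_insert.mp hp with hpq | hps
        · subst hpq
          have e1 : ∀ z : K.obj k₀, K.map (m ≫ f ≫ IsFiltered.coeqHom f g') z
              = K.map (IsFiltered.coeqHom f g') (K.map f (K.map m z)) := by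
            intro z
            simp [FunctorToTypes.map_comp_apply]
          rw [e1, e1, hfg]
          have e2 : K.map (IsFiltered.coeqHom f g') (K.map g' (K.map m (b p)))
              = K.map (g' ≫ IsFiltered.coeqHom f g') (K.map m (b p)) := by
            simp [FunctorToTypes.map_comp_apply]
          have e3 : K.map (IsFiltered.coeqHom f g') (K.map f (K.map m (b p)))
              = K.map (f ≫ IsFiltered.coeqHom f g') (K.map m (b p)) := by
            simp [FunctorToTypes.map_comp_apply]
          rw [e2, e3, ← IsFiltered.coeq_condition f g']
        · have := hm p hps
          have e1 : ∀ z : K.obj k₀, K.map (m ≫ f ≫ IsFiltered.coeqHom f g') z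
              = K.map (f ≫ IsFiltered.coeqHom f g') (K.map m z) := by
            intro z
            simp [FunctorToTypes.map_comp_apply]
          rw [e1, e1, this]
    obtain ⟨k, m, hm⟩ := key Finset.univ
    refine ⟨k, u ≫ m, v ≫ m, ?_⟩
    refine ConcreteCategory.hom_ext _ _ fun p => ?_
    show K.map (u ≫ m) (xi p) = K.map (v ≫ m) (xj p)
    rw [FunctorToTypes.map_comp_apply, FunctorToTypes.map_comp_apply]
    exact hm p (Finset.mem_univ p)

lemma forgetPreserves [PreservesFilteredColimits (T : Type ⥤ Type)] (J : Type)
    [SmallCategory J] [IsFiltered J] : PreservesColimitsOfShape J (Monad.forget T) := by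
  have : PreservesColimitsOfShape J (T : Type ⥤ Type) := inferInstance
  exact preservesColimitOfShape_of_createsColimitsOfShape_and_hasColimitsOfShape _

noncomputable def freeCoyonedaIso (X : Type) :
    Monad.forget T ⋙ (coyoneda.obj (Opposite.op X) : Type ⥤ Type)
      ≅ coyoneda.obj (Opposite.op (T.free.obj X)) := by
  refine NatIso.ofComponents (fun B => Equiv.toIso (T.adj.homEquiv X B).symm) ?_
  intro B B' f
  refine ConcreteCategory.hom_ext _ _ fun g => ?_
  show (T.adj.homEquiv X B').symm (g ≫ (Monad.forget T).map f)
      = (T.adj.homEquiv X B).symm g ≫ f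
  exact (T.adj.homEquiv_naturality_right_symm g f)

lemma free_isFP (X : Type) [Finite X] [PreservesFilteredColimits (T : Type ⥤ Type)] :
    ∀ (J : Type) (_ : SmallCategory J) (_ : IsFiltered J),
      Nonempty (PreservesColimitsOfShape J (coyoneda.obj (Opposite.op (T.free.obj X)))) := by
  intro J hJ1 hJ2
  have h1 : PreservesColimitsOfShape J (coyoneda.obj (Opposite.op X) : Type ⥤ Type) :=
    coyonedaFinitePreserves X J
  have h2 : PreservesColimitsOfShape J (Monad.forget T) := forgetPreserves (T := T) J
  have h3 : PreservesColimitsOfShape J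
      (Monad.forget T ⋙ (coyoneda.obj (Opposite.op X) : Type ⥤ Type)) :=
    comp_preservesColimitsOfShape _ _
  exact ⟨preservesColimitsOfShape_of_natIso (freeCoyonedaIso (T := T) X)⟩

end FreeFP

-- ## Block 6: lifting coalgebra structure along a surjective cover
section CoalgCover
variable (F : T.Algebra ⥤ T.Algebra)

noncomputable def coverCoalg (C : Endofunctor.Coalgebra F) (X : Type)
    (e : T.free.obj X ⟶ C.V) (he : Surjective e.f)
    (hsurj : ∀ {A B : T.Algebra} (f : A ⟶ B), Surjective f.f → Surjective (F.map f).f) :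
    Endofunctor.Coalgebra F where
  V := T.free.obj X
  str := freeExt T (fun x => surjInv (hsurj e he) (C.str.f (e.f (T.η.app X x))))

noncomputable def coverHom (C : Endofunctor.Coalgebra F) (X : Type)
    (e : T.free.obj X ⟶ C.V) (he : Surjective e.f)
    (hsurj : ∀ {A B : T.Algebra} (f : A ⟶ B), Surjective f.f → Surjective (F.map f).f) :
    coverCoalg F C X e he hsurj ⟶ C where
  f := e
  h := by
    apply free_hom_ext
    intro x
    show (F.map e).f ((freeExt T _).f (T.η.app X x)) = _
    rw [freeExt_η]
    show (F.map e).f (surjInv (hsurj e he) (C.str.f (e.f (T.η.app X x)))) = _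
    rw [surjInv_eq (hsurj e he)]
    rfl

lemma isFP_of_iso {B B' : T.Algebra} (i : B ≅ B') (hfp : IsFP T B') : IsFP T B := by
  intro J hJ1 hJ2
  obtain ⟨p⟩ := hfp J hJ1 hJ2
  exact ⟨preservesColimitsOfShape_of_natIso (coyoneda.mapIso i.op)⟩

end CoalgCover

-- ## Block 7: the comparison construction
section Main
variable (F : T.Algebra ⥤ T.Algebra)

structure Kob where
  n : ℕ
  s : Setoid ((T : Type ⥤ Type).obj (Fin n))
  hs : IsCong T (T.free.obj (Fin n)) s
  c : quotAlg (T.free.obj (Fin n)) s hs ⟶ F.obj (quotAlg (T.free.obj (Fin n)) s hs)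
  hfp : IsFP T (quotAlg (T.free.obj (Fin n)) s hs)

noncomputable def Wc (k : Kob F) : Endofunctor.Coalgebra F :=
  ⟨quotAlg (T.free.obj (Fin k.n)) k.s k.hs, k.c⟩

noncomputable def Wfp (k : Kob F) : ObjectProperty.FullSubcategory (Pfp T F) := ⟨Wc F k, k.hfp⟩

noncomputable def Yt : Type := Σ k : Kob F, Quotient k.s

noncomputable def embY (k : Kob F) (x : Quotient k.s) : Yt F := ⟨k, x⟩

inductive Gen : (T : Type ⥤ Type).obj (Yt F) → (T : Type ⥤ Type).obj (Yt F) → Prop where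
  | g1 (k : Kob F) (t : (T : Type ⥤ Type).obj (Quotient k.s)) :
      Gen ((T : Type ⥤ Type).map (↾(embY F k)) t)
          (T.η.app (Yt F) (embY F k ((Wc F k).V.a t)))
  | g2 (k k' : Kob F) (f : Wc F k ⟶ Wc F k') (x : Quotient k.s) :
      Gen (T.η.app (Yt F) (embY F k x)) (T.η.app (Yt F) (embY F k' (f.f.f x)))

noncomputable def RQ : Setoid ((T : Type ⥤ Type).obj (Yt F)) where
  r a b := ∀ ρ : Setoid ((T : Type ⥤ Type).obj (Yt F)),
    IsCong T (T.free.obj (Yt F)) ρ → (∀ u v, Gen F u v → ρ.r u v) → ρ.r a b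
  iseqv := by
    constructor
    · intro a ρ _ _; exact ρ.refl a
    · intro a b hab ρ h1 h2; exact ρ.symm (hab ρ h1 h2)
    · intro a b c hab hbc ρ h1 h2; exact ρ.trans (hab ρ h1 h2) (hbc ρ h1 h2)

lemma hRQ : IsCong T (T.free.obj (Yt F)) (RQ F) := by
  intro p ρ hρ hgen
  have key := hρ ((T : Type ⥤ Type).map
    (↾fun q : {xy : ((T : Type ⥤ Type).obj (Yt F)) × ((T : Type ⥤ Type).obj (Yt F)) //
        (RQ F).r xy.1 xy.2} =>
      (⟨q.1, q.2 ρ hρ hgen⟩ : {xy : ((T : Type ⥤ Type).obj (Yt F)) ×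
        ((T : Type ⥤ Type).obj (Yt F)) // ρ.r xy.1 xy.2})) p)
  erw [tmap_tmap, tmap_tmap] at key
  exact key

lemma gen_le {u v : (T : Type ⥤ Type).obj (Yt F)} (h : Gen F u v) : (RQ F).r u v :=
  fun ρ _ h2 => h2 u v h

noncomputable def Q : T.Algebra := quotAlg (T.free.obj (Yt F)) (RQ F) (hRQ F)

noncomputable def kap (k : Kob F) : (Wc F k).V ⟶ Q F where
  f := ↾fun x => Quotient.mk (RQ F) (T.η.app (Yt F) (embY F k x))
  h := by
    refine ConcreteCategory.hom_ext _ _ fun t => ?_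
    show (Q F).a ((T : Type ⥤ Type).map _ t)
        = Quotient.mk (RQ F) (T.η.app (Yt F) (embY F k ((Wc F k).V.a t)))
    have e1 : (T : Type ⥤ Type).map
        (↾fun x : (Wc F k).V.A => Quotient.mk (RQ F) (T.η.app (Yt F) (embY F k x))) t
        = (T : Type ⥤ Type).map (↾(Quotient.mk (RQ F)))
          ((T : Type ⥤ Type).map (↾fun x => T.η.app (Yt F) (embY F k x)) t) :=
      (tmap_tmap T (↾fun x => T.η.app (Yt F) (embY F k x)) (↾(Quotient.mk (RQ F))) t).symm
    erw [e1]
    show quotMap (T.free.obj (Yt F)) (RQ F) ((T : Type ⥤ Type).map (↾(Quotient.mk (RQ F))) _) = _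
    erw [quotMap_mk _ _ (hRQ F)]
    have e2 : (T : Type ⥤ Type).map
        (↾fun x : (Wc F k).V.A => T.η.app (Yt F) (embY F k x)) t
        = (T : Type ⥤ Type).map (T.η.app (Yt F)) ((T : Type ⥤ Type).map (↾(embY F k)) t) :=
      (tmap_tmap T (↾(embY F k)) (T.η.app (Yt F)) t).symm
    refine Eq.trans (congrArg (Quotient.mk (RQ F)) ?_)
      (Quotient.sound (gen_le F (Gen.g1 k t)))
    exact (congrArg (T.μ.app (Yt F)) e2).trans (right_unit_pt T _)

lemma kap_f (k : Kob F) (x : Quotient k.s) :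
    (kap F k).f x = Quotient.mk (RQ F) (T.η.app (Yt F) (embY F k x)) := rfl


noncomputable def ctF : T.free.obj (Yt F) ⟶ F.obj (Q F) :=
  freeExt T (fun y => (F.map (kap F y.1)).f (y.1.c.f y.2))

lemma ct_gen (u v : (T : Type ⥤ Type).obj (Yt F)) (h : Gen F u v) :
    (ctF F).f u = (ctF F).f v := by
  cases h with
  | g1 k t =>
    have e2 : (T : Type ⥤ Type).map (↾fun x : (Wc F k).V.A => T.η.app (Yt F) (embY F k x)) t
        = (T : Type ⥤ Type).map (T.η.app (Yt F)) ((T : Type ⥤ Type).map (↾(embY F k)) t) :=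
      (tmap_tmap T (↾(embY F k)) (T.η.app (Yt F)) t).symm
    have e0 : (T.free.obj (Yt F)).a ((T : Type ⥤ Type).map
        (↾fun x : (Wc F k).V.A => T.η.app (Yt F) (embY F k x)) t)
        = (T : Type ⥤ Type).map (↾(embY F k)) t :=
      (congrArg (T.μ.app (Yt F)) e2).trans (right_unit_pt T _)
    erw [← e0, ← hom_h T (ctF F)]
    have e3 : (T : Type ⥤ Type).map (ctF F).f ((T : Type ⥤ Type).map
        (↾fun x : (Wc F k).V.A => T.η.app (Yt F) (embY F k x)) t)
        = (T : Type ⥤ Type).map (↾fun x : (Wc F k).V.A =>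
            (F.map (kap F k)).f (k.c.f x)) t := by
      erw [tmap_tmap]
      exact tmap_congr T (fun x => freeExt_η T _ _) t
    rw [e3]
    have e4 : (T : Type ⥤ Type).map (↾fun x : (Wc F k).V.A =>
        (F.map (kap F k)).f (k.c.f x)) t
        = (T : Type ⥤ Type).map (F.map (kap F k)).f ((T : Type ⥤ Type).map k.c.f t) :=
      (tmap_tmap T k.c.f (F.map (kap F k)).f t).symm
    erw [e4, hom_h T (F.map (kap F k))]
    refine Eq.trans (congrArg (F.map (kap F k)).f (hom_h T k.c t)) ?_
    exact (freeExt_η T (fun y : Yt F => (F.map (kap F y.1)).f (y.1.c.f y.2))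
      (embY F k ((Wc F k).V.a t))).symm
  | g2 k k' f x =>
    have h1 : (ctF F).f (T.η.app (Yt F) (embY F k x)) = (F.map (kap F k)).f (k.c.f x) :=
      freeExt_η T _ _
    have h2 : (ctF F).f (T.η.app (Yt F) (embY F k' (f.f.f x)))
        = (F.map (kap F k')).f (k'.c.f (f.f.f x)) := freeExt_η T _ _
    rw [h1, h2]
    have h3 : k'.c.f (f.f.f x) = (F.map f.f).f (k.c.f x) :=
      (ConcreteCategory.congr_hom (congrArg Monad.Algebra.Hom.f f.h) x).symm
    rw [h3]
    have h4 : f.f ≫ kap F k' = kap F k := by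
      apply Monad.Algebra.Hom.ext
      refine ConcreteCategory.hom_ext _ _ fun z => ?_
      exact (Quotient.sound (gen_le F (Gen.g2 k k' f z))).symm
    have h5 : (F.map (kap F k')).f ((F.map f.f).f (k.c.f x))
        = (F.map (f.f ≫ kap F k')).f (k.c.f x) := by
      rw [F.map_comp]
      rfl
    rw [h5, h4]

lemma ct_ker : ∀ u v, (RQ F).r u v → (ctF F).f u = (ctF F).f v :=
  fun u v h => h (Setoid.ker (ctF F).f) (ker_isCong T (ctF F)) (fun a b hg => ct_gen F a b hg)

noncomputable def cQ : Q F ⟶ F.obj (Q F) :=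
  quotDesc _ _ _ (ctF F) (fun x y h => ct_ker F x y h)

noncomputable def Qco : Endofunctor.Coalgebra F := ⟨Q F, cQ F⟩

noncomputable def kapCo (k : Kob F) : Wc F k ⟶ Qco F where
  f := kap F k
  h := by
    apply Monad.Algebra.Hom.ext
    refine ConcreteCategory.hom_ext _ _ fun x => ?_
    show (F.map (kap F k)).f (k.c.f x) = (cQ F).f ((kap F k).f x)
    erw [kap_f]
    show _ = (ctF F).f (T.η.app (Yt F) (embY F k x))
    exact (freeExt_η T (fun y : Yt F => (F.map (kap F y.1)).f (y.1.c.f y.2))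
      (embY F k x)).symm

lemma exists_fin_cover [PreservesFilteredColimits (T : Type ⥤ Type)] (B : T.Algebra)
    (hB : IsFP T B) : ∃ (n : ℕ) (e : T.free.obj (Fin n) ⟶ B), Surjective e.f := by
  obtain ⟨S, hS⟩ := exists_cover B hB
  classical
  refine ⟨S.card,
    T.free.map (↾fun i => ((S.equivFin.symm i : {x : B.A // x ∈ S}))) ≫ epsAlg B S, ?_⟩
  have hsur : Surjective ((T : Type ⥤ Type).map
      (↾fun i : Fin S.card => (S.equivFin.symm i : {x : B.A // x ∈ S}))) :=
    tmap_surjective T _ (fun p => ⟨S.equivFin p, by simp⟩)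
  exact hS.comp hsur

structure Real (A : ObjectProperty.FullSubcategory (Pfp T F)) where
  k : Kob F
  iso : (Wc F k).V ≅ A.obj.V
  hstr : (Wc F k).str = iso.hom ≫ A.obj.str ≫ F.map iso.inv

noncomputable def realize [PreservesFilteredColimits (T : Type ⥤ Type)]
    (A : ObjectProperty.FullSubcategory (Pfp T F)) : Real F A := by
  classical
  have hc := exists_fin_cover (T := T) A.obj.V A.property
  let n := hc.choose
  let e : T.free.obj (Fin n) ⟶ A.obj.V := hc.choose_spec.choose
  have he : Surjective e.f := hc.choose_spec.choose_spec
  let s := Setoid.ker e.f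
  let hs := ker_isCong T e
  let QA := quotAlg (T.free.obj (Fin n)) s hs
  let mbar : QA ⟶ A.obj.V := quotDesc _ _ _ e (fun _ _ hxy => hxy)
  have hmsur : Surjective mbar.f := by
    intro b
    obtain ⟨t, ht⟩ := he b
    exact ⟨Quotient.mk s t, ht⟩
  have hminj : Injective mbar.f := by
    intro z1 z2 hz
    induction z1 using Quotient.ind with
    | _ t1 =>
      induction z2 using Quotient.ind with
      | _ t2 => exact Quotient.sound (show e.f t1 = e.f t2 from hz)
  have hg1 : ∀ b, mbar.f (surjInv hmsur b) = b := fun b => surjInv_eq hmsur b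
  have hg2 : ∀ z, surjInv hmsur (mbar.f z) = z := fun z => hminj (hg1 (mbar.f z))
  let minv : A.obj.V ⟶ QA :=
    { f := ↾(surjInv hmsur)
      h := by
        refine ConcreteCategory.hom_ext _ _ fun t => ?_
        apply hminj
        show mbar.f (QA.a ((T : Type ⥤ Type).map (↾(surjInv hmsur)) t))
            = mbar.f (surjInv hmsur (A.obj.V.a t))
        rw [← hom_h T mbar, tmap_tmap, tmap_congr T hg1, tmap_id, hg1] }
  let isoQ : QA ≅ A.obj.V :=
    { hom := mbar
      inv := minv
      hom_inv_id := by
        apply Monad.Algebra.Hom.ext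
        refine ConcreteCategory.hom_ext _ _ fun z => ?_
        exact hg2 z
      inv_hom_id := by
        apply Monad.Algebra.Hom.ext
        refine ConcreteCategory.hom_ext _ _ fun b => ?_
        exact hg1 b }
  exact
    { k := ⟨n, s, hs, isoQ.hom ≫ A.obj.str ≫ F.map isoQ.inv,
        isFP_of_iso isoQ A.property⟩
      iso := isoQ
      hstr := rfl }

variable [PreservesFilteredColimits (T : Type ⥤ Type)]

noncomputable def rhoHom (A : ObjectProperty.FullSubcategory (Pfp T F)) :
    Wc F (realize F A).k ⟶ A.obj where
  f := (realize F A).iso.hom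
  h := by
    rw [(realize F A).hstr]
    simp [← F.map_comp]

noncomputable def rhoInv (A : ObjectProperty.FullSubcategory (Pfp T F)) :
    A.obj ⟶ Wc F (realize F A).k where
  f := (realize F A).iso.inv
  h := by
    rw [(realize F A).hstr]
    simp

noncomputable def Lam (A : ObjectProperty.FullSubcategory (Pfp T F)) : A.obj ⟶ Qco F :=
  rhoInv F A ≫ kapCo F (realize F A).k

lemma Lam_natural {A B : ObjectProperty.FullSubcategory (Pfp T F)} (f : A ⟶ B) :
    (ObjectProperty.ι (Pfp T F)).map f ≫ Lam F B = Lam F A := by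
  apply CategoryTheory.Endofunctor.Coalgebra.ext
  apply Monad.Algebra.Hom.ext
  refine ConcreteCategory.hom_ext _ _ fun x => ?_
  show (kap F (realize F B).k).f ((realize F B).iso.inv.f (f.hom.f.f x))
      = (kap F (realize F A).k).f ((realize F A).iso.inv.f x)
  erw [kap_f, kap_f]
  have hx : (realize F A).iso.hom.f ((realize F A).iso.inv.f x) = x :=
    ConcreteCategory.congr_hom (congrArg Monad.Algebra.Hom.f (realize F A).iso.inv_hom_id) x
  have key := Quotient.sound (gen_le F (Gen.g2 _ _ (rhoHom F A ≫ f.hom ≫ rhoInv F B)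
    ((realize F A).iso.inv.f x)))
  refine Eq.trans ?_ key.symm
  have hz : (realize F B).iso.inv.f (f.hom.f.f x)
      = (realize F B).iso.inv.f (f.hom.f.f ((realize F A).iso.hom.f ((realize F A).iso.inv.f x))) := by
    rw [hx]
  exact congrArg (fun z => Quotient.mk (RQ F)
    (T.η.app (Yt F) (embY F (realize F B).k z))) hz

noncomputable def CC : Cocone (ObjectProperty.ι (Pfp T F)) where
  pt := Qco F
  ι :=
    { app := fun A => Lam F A
      naturality := fun A B f => by
        rw [Lam_natural F f]
        simp }


variable [HasColimit (ObjectProperty.ι (Pfp T F))]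

noncomputable def CVa : T.Algebra := (colimit (ObjectProperty.ι (Pfp T F))).V

noncomputable def chiF : T.free.obj (Yt F) ⟶ CVa F :=
  freeExt T (fun y => (colimit.ι (ObjectProperty.ι (Pfp T F)) (Wfp F y.1)).f.f y.2)

lemma chi_gen (u v : (T : Type ⥤ Type).obj (Yt F)) (hg : Gen F u v) :
    (chiF F).f u = (chiF F).f v := by
  cases hg with
  | g1 k t =>
    have e2 : (T : Type ⥤ Type).map (↾fun x : (Wc F k).V.A => T.η.app (Yt F) (embY F k x)) t
        = (T : Type ⥤ Type).map (T.η.app (Yt F)) ((T : Type ⥤ Type).map (↾(embY F k)) t) :=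
      (tmap_tmap T (↾(embY F k)) (T.η.app (Yt F)) t).symm
    have e0 : (T.free.obj (Yt F)).a ((T : Type ⥤ Type).map
        (↾fun x : (Wc F k).V.A => T.η.app (Yt F) (embY F k x)) t)
        = (T : Type ⥤ Type).map (↾(embY F k)) t :=
      (congrArg (T.μ.app (Yt F)) e2).trans (right_unit_pt T _)
    erw [← e0, ← hom_h T (chiF F)]
    have e3 : (T : Type ⥤ Type).map (chiF F).f ((T : Type ⥤ Type).map
        (↾fun x : (Wc F k).V.A => T.η.app (Yt F) (embY F k x)) t)
        = (T : Type ⥤ Type).map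
            ((colimit.ι (ObjectProperty.ι (Pfp T F)) (Wfp F k)).f.f) t := by
      erw [tmap_tmap]
      refine (tmap_congr T (g := fun x => (colimit.ι (ObjectProperty.ι (Pfp T F)) (Wfp F k)).f.f x)
        (fun x => freeExt_η T
        (fun y => (colimit.ι (ObjectProperty.ι (Pfp T F)) (Wfp F y.1)).f.f y.2)
        (embY F k x)) t).trans ?_
      rfl
    rw [e3]
    refine Eq.trans (hom_h T (colimit.ι (ObjectProperty.ι (Pfp T F)) (Wfp F k)).f t) ?_
    exact (freeExt_η T
      (fun y => (colimit.ι (ObjectProperty.ι (Pfp T F)) (Wfp F y.1)).f.f y.2)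
      (embY F k ((Wc F k).V.a t))).symm
  | g2 k k' f x =>
    have h1 : (chiF F).f (T.η.app (Yt F) (embY F k x))
        = (colimit.ι (ObjectProperty.ι (Pfp T F)) (Wfp F k)).f.f x := freeExt_η T _ _
    have h2 : (chiF F).f (T.η.app (Yt F) (embY F k' (f.f.f x)))
        = (colimit.ι (ObjectProperty.ι (Pfp T F)) (Wfp F k')).f.f (f.f.f x) :=
      freeExt_η T _ _
    rw [h1, h2]
    have hw := colimit.w (ObjectProperty.ι (Pfp T F)) (show Wfp F k ⟶ Wfp F k' from ObjectProperty.homMk f)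
    exact (ConcreteCategory.congr_hom (congrArg (fun (m : Wc F k ⟶ colimit (ObjectProperty.ι (Pfp T F)))
      => m.f.f) hw) x).symm

noncomputable def v0 : Q F ⟶ CVa F :=
  quotDesc _ _ _ (chiF F) (fun u v hr =>
    hr (Setoid.ker (chiF F).f) (ker_isCong T (chiF F)) (fun a b hg => chi_gen F a b hg))

lemma kap_v0 (k : Kob F) :
    kap F k ≫ v0 F = (colimit.ι (ObjectProperty.ι (Pfp T F)) (Wfp F k)).f := by
  apply Monad.Algebra.Hom.ext
  refine ConcreteCategory.hom_ext _ _ fun w => ?_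
  show (v0 F).f (Quotient.mk (RQ F) (T.η.app (Yt F) (embY F k w))) = _
  show (chiF F).f (T.η.app (Yt F) (embY F k w)) = _
  exact freeExt_η T _ _

noncomputable def vCo : Qco F ⟶ colimit (ObjectProperty.ι (Pfp T F)) where
  f := v0 F
  h := by
    have key : ctF F ≫ F.map (v0 F)
        = chiF F ≫ (colimit (ObjectProperty.ι (Pfp T F))).str := by
      apply free_hom_ext
      intro y
      show (F.map (v0 F)).f ((ctF F).f (T.η.app (Yt F) y))
          = ((colimit (ObjectProperty.ι (Pfp T F))).str).f ((chiF F).f (T.η.app (Yt F) y))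
      rw [show (ctF F).f (T.η.app (Yt F) y) = (F.map (kap F y.1)).f (y.1.c.f y.2) from
            freeExt_η T _ _,
          show (chiF F).f (T.η.app (Yt F) y) = (colimit.ι (ObjectProperty.ι (Pfp T F))
            (Wfp F y.1)).f.f y.2 from freeExt_η T _ _]
      have e1 : (F.map (v0 F)).f ((F.map (kap F y.1)).f (y.1.c.f y.2))
          = (F.map (kap F y.1 ≫ v0 F)).f (y.1.c.f y.2) := by
        rw [F.map_comp]
        rfl
      rw [e1, kap_v0]
      have hsq := (colimit.ι (ObjectProperty.ι (Pfp T F)) (Wfp F y.1)).h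
      exact ConcreteCategory.congr_hom (congrArg Monad.Algebra.Hom.f hsq) y.2
    apply quot_hom_ext _ _ (hRQ F)
    intro x
    exact ConcreteCategory.congr_hom (congrArg Monad.Algebra.Hom.f key) x

noncomputable def dQ : colimit (ObjectProperty.ι (Pfp T F)) ⟶ Qco F :=
  colimit.desc (ObjectProperty.ι (Pfp T F)) (CC F)

lemma Lam_v (A : ObjectProperty.FullSubcategory (Pfp T F)) :
    Lam F A ≫ vCo F = colimit.ι (ObjectProperty.ι (Pfp T F)) A := by
  apply CategoryTheory.Endofunctor.Coalgebra.ext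
  apply Monad.Algebra.Hom.ext
  refine ConcreteCategory.hom_ext _ _ fun z => ?_
  show (v0 F).f ((kap F (realize F A).k).f ((realize F A).iso.inv.f z)) = _
  have e1 : (v0 F).f ((kap F (realize F A).k).f ((realize F A).iso.inv.f z))
      = (colimit.ι (ObjectProperty.ι (Pfp T F)) (Wfp F (realize F A).k)).f.f
          ((realize F A).iso.inv.f z) :=
    ConcreteCategory.congr_hom (congrArg Monad.Algebra.Hom.f (kap_v0 F (realize F A).k))
      ((realize F A).iso.inv.f z)
  rw [e1]
  have hw := colimit.w (ObjectProperty.ι (Pfp T F))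
    (show Wfp F (realize F A).k ⟶ A from ObjectProperty.homMk (rhoHom F A))
  have e2 := ConcreteCategory.congr_hom (congrArg (fun (m : Wc F (realize F A).k ⟶
      colimit (ObjectProperty.ι (Pfp T F))) => m.f.f) hw) ((realize F A).iso.inv.f z)
  refine Eq.trans e2.symm ?_
  show (colimit.ι (ObjectProperty.ι (Pfp T F)) A).f.f
      ((realize F A).iso.hom.f ((realize F A).iso.inv.f z)) = _
  exact congrArg (colimit.ι (ObjectProperty.ι (Pfp T F)) A).f.f
    (ConcreteCategory.congr_hom (congrArg Monad.Algebra.Hom.f (realize F A).iso.inv_hom_id) z)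

lemma iota_dQ (A : ObjectProperty.FullSubcategory (Pfp T F)) :
    colimit.ι (ObjectProperty.ι (Pfp T F)) A ≫ dQ F = Lam F A :=
  colimit.ι_desc _ _

lemma dv : dQ F ≫ vCo F = 𝟙 (colimit (ObjectProperty.ι (Pfp T F))) := by
  apply colimit.hom_ext
  intro A
  rw [Category.comp_id, ← Category.assoc, iota_dQ]
  exact Lam_v F A

-- Goal 2: each colimit injection of the fp colimit lands in the range of h
lemma range_iota
    (hsurj : ∀ {A B : T.Algebra} (f : A ⟶ B), Function.Surjective f.f →
      Function.Surjective (F.map f).f)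
    [HasColimit (ObjectProperty.ι (Pffg T F))]
    (h : colimit (ObjectProperty.ι (Pffg T F)) ⟶
        colimit (ObjectProperty.ι (Pfp T F)))
    (hh : ∀ (c : ObjectProperty.FullSubcategory (Pffg T F)) (hc : Pfp T F c.obj),
      colimit.ι (ObjectProperty.ι (Pffg T F)) c ≫ h =
        colimit.ι (ObjectProperty.ι (Pfp T F)) ⟨c.obj, hc⟩)
    (A : ObjectProperty.FullSubcategory (Pfp T F)) (x : A.obj.V.A) :
    (colimit.ι (ObjectProperty.ι (Pfp T F)) A).f.f x ∈ Set.range h.f.f := by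
  classical
  obtain ⟨S, hS⟩ := exists_cover A.obj.V A.property
  let Ccov : Endofunctor.Coalgebra F :=
    coverCoalg F A.obj {p : A.obj.V.A // p ∈ S} (epsAlg A.obj.V S) hS hsurj
  have hffg : Pffg T F Ccov := ⟨{p : A.obj.V.A // p ∈ S}, inferInstance, ⟨Iso.refl _⟩⟩
  have hcfp : Pfp T F Ccov := free_isFP (T := T) {p : A.obj.V.A // p ∈ S}
  let efp : (⟨Ccov, hcfp⟩ : ObjectProperty.FullSubcategory (Pfp T F)) ⟶ A :=
    ObjectProperty.homMk (coverHom F A.obj {p : A.obj.V.A // p ∈ S} (epsAlg A.obj.V S) hS hsurj)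
  obtain ⟨t, ht⟩ := hS x
  have hw := colimit.w (ObjectProperty.ι (Pfp T F)) efp
  have hhc := hh ⟨Ccov, hffg⟩ hcfp
  refine ⟨(colimit.ι (ObjectProperty.ι (Pffg T F)) ⟨Ccov, hffg⟩).f.f t, ?_⟩
  have e1 : h.f.f ((colimit.ι (ObjectProperty.ι (Pffg T F)) ⟨Ccov, hffg⟩).f.f t)
      = (colimit.ι (ObjectProperty.ι (Pfp T F)) ⟨Ccov, hcfp⟩).f.f t :=
    ConcreteCategory.congr_hom (congrArg (fun (m : Ccov ⟶ colimit (ObjectProperty.ι (Pfp T F)))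
      => m.f.f) hhc) t
  have e2 : (colimit.ι (ObjectProperty.ι (Pfp T F)) ⟨Ccov, hcfp⟩).f.f t
      = (colimit.ι (ObjectProperty.ι (Pfp T F)) A).f.f ((epsAlg A.obj.V S).f t) :=
    (ConcreteCategory.congr_hom (congrArg (fun (m : Ccov ⟶ colimit (ObjectProperty.ι (Pfp T F)))
      => m.f.f) hw) t).symm
  rw [e1, e2, ht]

lemma range_closed
    [HasColimit (ObjectProperty.ι (Pffg T F))]
    (h : colimit (ObjectProperty.ι (Pffg T F)) ⟶
        colimit (ObjectProperty.ι (Pfp T F)))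
    (u : (T : Type ⥤ Type).obj {z : (CVa F).A // z ∈ Set.range h.f.f}) :
    (CVa F).a ((T : Type ⥤ Type).map (↾fun p => p.1) u) ∈ Set.range h.f.f := by
  classical
  have hσ : ∀ p : {z : (CVa F).A // z ∈ Set.range h.f.f}, h.f.f p.2.choose = p.1 :=
    fun p => p.2.choose_spec
  refine ⟨(colimit (ObjectProperty.ι (Pffg T F))).V.a
    ((T : Type ⥤ Type).map (↾fun p => p.2.choose) u), ?_⟩
  have e1 := hom_h T h.f ((T : Type ⥤ Type).map
    (↾fun p : {z : (CVa F).A // z ∈ Set.range h.f.f} => p.2.choose) u)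
  refine Eq.trans e1.symm ?_
  rw [tmap_tmap]
  exact congrArg (CVa F).a (tmap_congr T hσ u)

lemma v0_range
    (hsurj : ∀ {A B : T.Algebra} (f : A ⟶ B), Function.Surjective f.f →
      Function.Surjective (F.map f).f)
    [HasColimit (ObjectProperty.ι (Pffg T F))]
    (h : colimit (ObjectProperty.ι (Pffg T F)) ⟶
        colimit (ObjectProperty.ι (Pfp T F)))
    (hh : ∀ (c : ObjectProperty.FullSubcategory (Pffg T F)) (hc : Pfp T F c.obj),
      colimit.ι (ObjectProperty.ι (Pffg T F)) c ≫ h =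
        colimit.ι (ObjectProperty.ι (Pfp T F)) ⟨c.obj, hc⟩)
    (q : (Q F).A) : (v0 F).f q ∈ Set.range h.f.f := by
  induction q using Quotient.ind with
  | _ w =>
    show (chiF F).f w ∈ Set.range h.f.f
    show (CVa F).a ((T : Type ⥤ Type).map
      (↾fun (y : Yt F) => (colimit.ι (ObjectProperty.ι (Pfp T F)) (Wfp F y.1)).f.f y.2) w)
      ∈ Set.range h.f.f
    have e1 : (T : Type ⥤ Type).map
        (↾fun y : Yt F => (colimit.ι (ObjectProperty.ι (Pfp T F)) (Wfp F y.1)).f.f y.2) w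
        = (T : Type ⥤ Type).map (↾fun p : {z : (CVa F).A // z ∈ Set.range h.f.f} => p.1)
          ((T : Type ⥤ Type).map (↾fun y : Yt F =>
            (⟨(colimit.ι (ObjectProperty.ι (Pfp T F)) (Wfp F y.1)).f.f y.2,
              range_iota F hsurj h hh (Wfp F y.1) y.2⟩ :
                {z : (CVa F).A // z ∈ Set.range h.f.f})) w) := by
      erw [tmap_tmap]
      rfl
    rw [e1]
    exact range_closed F h _

end Main
end CanonAux

/-- Let `φF` be the colimit of the inclusion of the `F`-coalgebras with free finitely
generated carrier, and `ρF` the colimit of the inclusion of the coalgebras with finitely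
presentable carrier.  The canonical coalgebra morphism `h : φF ⟶ ρF` (the unique one
commuting with the colimit injections) is a strong epimorphism, i.e. surjective. -/
theorem canonical_morphism_phi_to_rho_surjective
    (T : Monad (Type)) [PreservesFilteredColimits (T : Type ⥤ Type)]
    (F : T.Algebra ⥤ T.Algebra) [PreservesFilteredColimits F]
    (hsurj : ∀ {A B : T.Algebra} (f : A ⟶ B), Function.Surjective f.f →
      Function.Surjective (F.map f).f)
    [HasColimit (ObjectProperty.ι (Pffg T F))]
    [HasColimit (ObjectProperty.ι (Pfp T F))]
    (h : colimit (ObjectProperty.ι (Pffg T F)) ⟶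
        colimit (ObjectProperty.ι (Pfp T F)))
    (hh : ∀ (c : ObjectProperty.FullSubcategory (Pffg T F)) (hc : Pfp T F c.obj),
      colimit.ι (ObjectProperty.ι (Pffg T F)) c ≫ h =
        colimit.ι (ObjectProperty.ι (Pfp T F)) ⟨c.obj, hc⟩) :
    Function.Surjective h.f.f := by
  intro x
  have hdv := CanonAux.dv (T := T) F
  have hx : (CanonAux.vCo F).f.f ((CanonAux.dQ F).f.f x) = x :=
    ConcreteCategory.congr_hom (congrArg (fun (m : colimit (ObjectProperty.ι (Pfp T F)) ⟶
      colimit (ObjectProperty.ι (Pfp T F))) => m.f.f) hdv) x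
  obtain ⟨y, hy⟩ := CanonAux.v0_range F hsurj h hh ((CanonAux.dQ F).f.f x)
  exact ⟨y, hy.trans hx⟩
end

section
/- Let T be a finitary monad on Set and F : Set^T ⥤ Set^T finitary, preserving surjective T-algebra morphisms and sifted colimits, so that φF is a fixed point of F with structure ζ : φF ≅ F(φF). Then (φF, ζ⁻¹) equipped with the operation assigning to each coalgebra c : TX → F(TX) (X finite) its colimit injection inj_c : TX → φF is the initial ffg-Bloom algebra for F. -/
open CategoryTheory CategoryTheory.Limits

/-- The coalgebra on a free finitely generated carrier, as an object of the full
subcategory of such coalgebras. -/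
def ffgObj (T : Monad (Type)) (F : T.Algebra ⥤ T.Algebra) (X : Type) (hX : Finite X)
    (c : T.free.obj X ⟶ F.obj (T.free.obj X)) : ObjectProperty.FullSubcategory (Pffg T F) :=
  ⟨⟨T.free.obj X, c⟩, X, hX, ⟨Iso.refl _⟩⟩

/-! The underlying algebra of `φF` is the colimit, in `T`-algebras, of the carriers of all
ffg coalgebras. Indeed, algebras of a monad on `Type` have all small colimits (a quotient of the
free algebra on the disjoint union of the carriers), the coalgebras on the free algebras over
`Fin n` form a small category equivalent to the ffg coalgebras, and the forgetful functor from
`F`-coalgebras preserves every colimit that exists downstairs. By functoriality, a solution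
operation `†` is a cocone on these carriers, so it factors uniquely through `φF`; the solution
axiom of `†` then makes the factorisation an `F`-algebra morphism. -/

universe v u

namespace CategoryTheory.Monad.Algebra

section General

variable {C : Type u} [Category.{v} C] {T : Monad C}

def ofSplitEpi (P : T.Algebra) {Y : C} (π : P.A ⟶ Y) [IsSplitEpi π]
    (a : (T : C ⥤ C).obj Y ⟶ Y) (w : (T : C ⥤ C).map π ≫ a = P.a ≫ π) : T.Algebra where
  A := Y
  a := a
  unit := by
    rw [← cancel_epi π]
    calc π ≫ T.η.app Y ≫ a = T.η.app P.A ≫ (T : C ⥤ C).map π ≫ a :=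
          by simpa using T.η.naturality_assoc π a
      _ = π ≫ 𝟙 Y := by rw [w, P.unit_assoc, Category.comp_id]
  assoc := by
    rw [← cancel_epi ((T : C ⥤ C).map ((T : C ⥤ C).map π))]
    calc (T : C ⥤ C).map ((T : C ⥤ C).map π) ≫ T.μ.app Y ≫ a
        = T.μ.app P.A ≫ (T : C ⥤ C).map π ≫ a := by simpa using T.μ.naturality_assoc π a
      _ = (T : C ⥤ C).map P.a ≫ (T : C ⥤ C).map π ≫ a := by rw [w, P.assoc_assoc]
      _ = (T : C ⥤ C).map ((T : C ⥤ C).map π) ≫ (T : C ⥤ C).map a ≫ a := by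
        rw [← Functor.map_comp_assoc, ← w, Functor.map_comp_assoc]

def toOfSplitEpi (P : T.Algebra) {Y : C} (π : P.A ⟶ Y) [IsSplitEpi π]
    (a : (T : C ⥤ C).obj Y ⟶ Y) (w : (T : C ⥤ C).map π ≫ a = P.a ≫ π) :
    P ⟶ ofSplitEpi P π a w where
  f := π
  h := w

def homOfSplitEpi {P Q B : T.Algebra} (q : P ⟶ Q) [IsSplitEpi q.f] (h : P ⟶ B) (g : Q.A ⟶ B.A)
    (hg : q.f ≫ g = h.f) : Q ⟶ B where
  f := g
  h := by
    rw [← cancel_epi ((T : C ⥤ C).map q.f)]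
    calc (T : C ⥤ C).map q.f ≫ (T : C ⥤ C).map g ≫ B.a = P.a ≫ q.f ≫ g := by
          rw [← Functor.map_comp_assoc, hg, h.h, ← hg]
      _ = (T : C ⥤ C).map q.f ≫ Q.a ≫ g := by rw [q.h_assoc]

def structHom (A : T.Algebra) : T.free.obj A.A ⟶ A where
  f := A.a
  h := A.assoc.symm

instance (A : T.Algebra) : IsSplitEpi (structHom A).f :=
  IsSplitEpi.mk' ⟨T.η.app A.A, A.unit⟩

lemma free_hom_ext {X : C} {B : T.Algebra} {u v : T.free.obj X ⟶ B}
    (huv : T.η.app X ≫ u.f = T.η.app X ≫ v.f) : u = v :=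
  (T.adj.homEquiv X B).injective (by
    simp only [Adjunction.homEquiv_unit, Monad.adj_unit, Monad.forget_map]
    exact huv)

end General

section Quotient

variable {T : Monad (Type u)} {P : T.Algebra} {ι : Sort*} {B : ι → T.Algebra}
  (h : ∀ i, P ⟶ B i)

def kernelSetoid : Setoid P.A where
  r x y := ∀ i, (h i).f x = (h i).f y
  iseqv := ⟨fun _ _ => rfl, fun hxy i => (hxy i).symm, fun hxy hyz i => (hxy i).trans (hyz i)⟩

def kernelMk : P.A ⟶ _root_.Quotient (kernelSetoid h) := ↾(_root_.Quotient.mk _)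

instance : IsSplitEpi (kernelMk h) :=
  (isSplitEpi_iff_surjective _).2 _root_.Quotient.mk_surjective

def kernelLift (i : ι) : _root_.Quotient (kernelSetoid h) ⟶ (B i).A :=
  ↾(_root_.Quotient.lift (h i).f fun _ _ hxy => hxy i)

lemma kernelMk_kernelLift (i : ι) : kernelMk h ≫ kernelLift h i = (h i).f := rfl

noncomputable def quotientByKernels : T.Algebra :=
  ofSplitEpi P (kernelMk h)
    ((T : Type u ⥤ Type u).map (↾_root_.Quotient.out) ≫ P.a ≫ kernelMk h) <| by
    ext t
    apply _root_.Quotient.sound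
    intro i
    -- `h i` factors through `kernelMk h`, so `P.a ≫ h i` only sees `T.map (kernelMk h)`.
    have hsec : ↾_root_.Quotient.out ≫ kernelMk h = 𝟙 _ := by ext x; exact Quotient.out_eq x
    have key : (T : Type u ⥤ Type u).map (kernelMk h) ≫
        (T : Type u ⥤ Type u).map (↾_root_.Quotient.out) ≫ P.a ≫ (h i).f =
          P.a ≫ (h i).f := by
      rw [← (h i).h, ← kernelMk_kernelLift h i, Functor.map_comp_assoc,
        ← Functor.map_comp_assoc (T : Type u ⥤ Type u) (↾_root_.Quotient.out), hsec,
        Functor.map_id, Category.id_comp, ← Functor.map_comp_assoc, kernelMk_kernelLift]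
    exact ConcreteCategory.congr_hom key t

noncomputable def quotientByKernelsMk : P ⟶ quotientByKernels h := toOfSplitEpi _ _ _ _

instance : IsSplitEpi (quotientByKernelsMk h).f := inferInstanceAs (IsSplitEpi (kernelMk h))

noncomputable def quotientByKernelsLift (i : ι) : quotientByKernels h ⟶ B i :=
  homOfSplitEpi (quotientByKernelsMk h) (h i) (kernelLift h i) rfl

lemma quotientByKernelsMk_lift (i : ι) :
    quotientByKernelsMk h ≫ quotientByKernelsLift h i = h i := rfl

lemma quotientByKernelsMk_eq {x y : P.A} (hxy : ∀ i, (h i).f x = (h i).f y) :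
    (quotientByKernelsMk h).f x = (quotientByKernelsMk h).f y :=
  _root_.Quotient.sound hxy

end Quotient

variable {T : Monad (Type u)} {J : Type u} [SmallCategory J] (D : J ⥤ T.Algebra)

abbrev colimitGenerators : Type u := Σ j, (D.obj j).A

def colimitGenerator (j : J) : (D.obj j).A ⟶ colimitGenerators D := ↾fun x => ⟨j, x⟩

def freeDesc (s : Cocone D) : T.free.obj (colimitGenerators D) ⟶ s.pt :=
  (T.adj.homEquiv _ _).symm (↾fun x => (s.ι.app x.1).f x.2)

lemma freeDesc_unit_apply (s : Cocone D) (j : J) (x : (D.obj j).A) :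
    (freeDesc D s).f (T.η.app _ ⟨j, x⟩) = (s.ι.app j).f x := by
  have h : T.adj.unit.app _ ≫ (freeDesc D s).f = ↾fun x => (s.ι.app x.1).f x.2 :=
    (T.adj.homEquiv_unit _ _ (freeDesc D s)).symm.trans ((T.adj.homEquiv _ _).apply_symm_apply _)
  exact ConcreteCategory.congr_hom h ⟨j, x⟩

lemma free_map_freeDesc (s : Cocone D) (j : J) :
    T.free.map (colimitGenerator D j) ≫ freeDesc D s = structHom (D.obj j) ≫ s.ι.app j := by
  refine free_hom_ext ?_
  ext x
  show (freeDesc D s).f ((T.free.map (colimitGenerator D j)).f (T.η.app _ x)) =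
    (s.ι.app j).f ((D.obj j).a (T.η.app _ x))
  have hnat : (T.free.map (colimitGenerator D j)).f (T.η.app _ x) =
      T.η.app _ (colimitGenerator D j x) := (T.η.naturality_apply _ x).symm
  rw [hnat]
  refine (freeDesc_unit_apply D s j x).trans ?_
  exact congrArg (s.ι.app j).f (ConcreteCategory.congr_hom (D.obj j).unit x).symm

/-- The free algebra on all elements of the diagram, divided by the joint kernel of the morphisms
induced by all cocones. -/
noncomputable abbrev colimitAlgebra : T.Algebra := quotientByKernels (freeDesc D)

noncomputable def colimitInj (j : J) : D.obj j ⟶ colimitAlgebra D :=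
  homOfSplitEpi (structHom (D.obj j))
    (T.free.map (colimitGenerator D j) ≫ quotientByKernelsMk (freeDesc D))
    (colimitGenerator D j ≫ T.η.app _ ≫ (quotientByKernelsMk (freeDesc D)).f) <| by
      ext t
      refine quotientByKernelsMk_eq _ fun s => ?_
      refine (freeDesc_unit_apply D s j _).trans ?_
      exact (ConcreteCategory.congr_hom (congrArg Hom.f (free_map_freeDesc D s j)) t).symm

noncomputable def colimitCocone : Cocone D where
  pt := colimitAlgebra D
  ι :=
    { app := colimitInj D
      naturality j k f := by
        ext x
        exact quotientByKernelsMk_eq _ fun s => (freeDesc_unit_apply D s k _).trans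
          ((ConcreteCategory.congr_hom (congrArg Hom.f (s.w f)) x).trans
            (freeDesc_unit_apply D s j x).symm) }

noncomputable def isColimitColimitCocone : IsColimit (colimitCocone D) where
  desc s := quotientByKernelsLift (freeDesc D) s
  fac s j := by
    ext x
    exact (ConcreteCategory.congr_hom (congrArg Hom.f (quotientByKernelsMk_lift _ s)) _).trans
      (freeDesc_unit_apply D s j x)
  uniq s m hm := by
    have : Epi (quotientByKernelsMk (freeDesc D)) := algebra_epi_of_epi _ _
    refine (cancel_epi (quotientByKernelsMk (freeDesc D))).1 ?_
    change _ = quotientByKernelsMk (freeDesc D) ≫ quotientByKernelsLift (freeDesc D) s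
    rw [quotientByKernelsMk_lift]
    refine free_hom_ext ?_
    ext ⟨j, x⟩
    exact (ConcreteCategory.congr_hom (congrArg Hom.f (hm j)) x).trans
      (freeDesc_unit_apply D s j x).symm

instance : HasColimitsOfSize.{u, u} T.Algebra :=
  ⟨fun _ _ => ⟨fun D => ⟨⟨⟨_, isColimitColimitCocone D⟩⟩⟩⟩⟩

end CategoryTheory.Monad.Algebra

namespace CategoryTheory.Endofunctor.Coalgebra

variable {C : Type u} [Category.{v} C] {F : C ⥤ C} {J : Type*} [Category J]
  {D : J ⥤ Coalgebra F} {c : Cocone (D ⋙ forget F)}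

def liftedStr (hc : IsColimit c) : c.pt ⟶ F.obj c.pt :=
  hc.desc
    { pt := F.obj c.pt
      ι :=
        { app j := (D.obj j).str ≫ F.map (c.ι.app j)
          naturality j k f :=
            calc (D.map f).f ≫ (D.obj k).str ≫ F.map (c.ι.app k)
                = ((D.obj j).str ≫ F.map (D.map f).f) ≫ F.map (c.ι.app k) :=
                  (Category.assoc _ _ _).symm.trans (congrArg (· ≫ _) (D.map f).h.symm)
              _ = (D.obj j).str ≫ F.map (c.ι.app j) :=
                  (Category.assoc _ _ _).trans
                    (congrArg ((D.obj j).str ≫ ·) ((F.map_comp _ _).symm.trans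
                      (congrArg F.map (c.w f))))
              _ = ((D.obj j).str ≫ F.map (c.ι.app j)) ≫ 𝟙 _ := (Category.comp_id _).symm } }

lemma ι_liftedStr (hc : IsColimit c) (j : J) :
    c.ι.app j ≫ liftedStr hc = (D.obj j).str ≫ F.map (c.ι.app j) :=
  hc.fac _ j

def liftedCocone (hc : IsColimit c) : Cocone D where
  pt := ⟨c.pt, liftedStr hc⟩
  ι :=
    { app j := ⟨c.ι.app j, (ι_liftedStr hc j).symm⟩
      naturality _ _ f := Hom.ext ((c.w f).trans (Category.comp_id _).symm) }

def isColimitLiftedCocone (hc : IsColimit c) : IsColimit (liftedCocone hc) where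
  desc s :=
    { f := hc.desc ((forget F).mapCocone s)
      h := hc.hom_ext fun j =>
        have hstr : c.ι.app j ≫ liftedStr hc ≫ F.map (hc.desc ((forget F).mapCocone s)) =
            (D.obj j).str ≫ F.map (s.ι.app j).f :=
          (Category.assoc _ _ _).symm.trans <| (congrArg (· ≫ _) (ι_liftedStr hc j)).trans <|
            (Category.assoc _ _ _).trans <| congrArg ((D.obj j).str ≫ ·) <|
              (F.map_comp _ _).symm.trans (congrArg F.map (hc.fac _ j))
        hstr.trans <| (s.ι.app j).h.trans <|
          (congrArg (· ≫ s.pt.str) (hc.fac ((forget F).mapCocone s) j).symm).trans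
            (Category.assoc _ _ _) }
  fac _ j := Hom.ext (hc.fac _ j)
  uniq s m hm := Hom.ext (hc.uniq ((forget F).mapCocone s) m.f fun j => congrArg Hom.f (hm j))

lemma preservesColimit_forget (hc : IsColimit c) : PreservesColimit D (forget F) :=
  preservesColimit_of_preserves_colimit_cocone (isColimitLiftedCocone hc) hc

lemma Hom.f_eq_str_comp_map_comp_inv {V W : Coalgebra F} (g : V ⟶ W) [IsIso W.str] :
    g.f = V.str ≫ F.map g.f ≫ inv W.str := by
  rw [← Category.assoc, g.h, Category.assoc, IsIso.hom_inv_id, Category.comp_id]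

end CategoryTheory.Endofunctor.Coalgebra

namespace Pffg

variable (T : Monad Type) (F : T.Algebra ⥤ T.Algebra)

/-- A small category equivalent to the full subcategory `Pffg T F`. -/
abbrev FinFree : Type :=
  InducedCategory (ObjectProperty.FullSubcategory (Pffg T F))
    fun j : Σ n : ℕ, T.free.obj (Fin n) ⟶ F.obj (T.free.obj (Fin n)) =>
      ffgObj T F (Fin j.1) inferInstance j.2

abbrev finFreeInclusion : FinFree T F ⥤ ObjectProperty.FullSubcategory (Pffg T F) :=
  inducedFunctor _

instance : (finFreeInclusion T F).EssSurj where
  mem_essImage V := by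
    obtain ⟨X, hX, ⟨e⟩⟩ := V.property
    let e' : V.obj.V ≅ T.free.obj (Fin (Nat.card X)) :=
      e ≪≫ T.free.mapIso (Finite.equivFin X).toIso
    refine ⟨⟨Nat.card X, e'.inv ≫ V.obj.str ≫ F.map e'.hom⟩,
      ⟨ObjectProperty.isoMk _ ?_⟩⟩
    exact (Endofunctor.Coalgebra.isoMk e' (e'.hom_inv_id_assoc _).symm).symm

instance : (finFreeInclusion T F).IsEquivalence where

variable {T F} [HasColimit (ObjectProperty.ι (Pffg T F))]

noncomputable def isColimitCarriers :
    IsColimit ((Endofunctor.Coalgebra.forget F).mapCocone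
      ((colimit.cocone (ObjectProperty.ι (Pffg T F))).whisker (finFreeInclusion T F))) :=
  have := Endofunctor.Coalgebra.preservesColimit_forget (colimit.isColimit
    ((finFreeInclusion T F ⋙ ObjectProperty.ι (Pffg T F)) ⋙ Endofunctor.Coalgebra.forget F))
  isColimitOfPreserves _ ((Functor.Final.isColimitWhiskerEquiv _ _).symm (colimit.isColimit _))

lemma carrier_hom_ext {B : T.Algebra} {u v : (colimit (ObjectProperty.ι (Pffg T F))).V ⟶ B}
    (huv : ∀ (X : Type) (hX : Finite X) (c : T.free.obj X ⟶ F.obj (T.free.obj X)),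
      (colimit.ι (ObjectProperty.ι (Pffg T F)) (ffgObj T F X hX c)).f ≫ u =
        (colimit.ι (ObjectProperty.ι (Pffg T F)) (ffgObj T F X hX c)).f ≫ v) : u = v :=
  isColimitCarriers.hom_ext fun k => huv _ inferInstance k.2

lemma exists_carrier_desc {A : T.Algebra}
    (dag : ∀ (X : Type) (_ : Finite X),
      (T.free.obj X ⟶ F.obj (T.free.obj X)) → (T.free.obj X ⟶ A))
    (hfunct : ∀ (X Y : Type) (hX : Finite X) (hY : Finite Y)
      (c : T.free.obj X ⟶ F.obj (T.free.obj X))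
      (d : T.free.obj Y ⟶ F.obj (T.free.obj Y))
      (m : (⟨T.free.obj X, c⟩ : Endofunctor.Coalgebra F) ⟶
        (⟨T.free.obj Y, d⟩ : Endofunctor.Coalgebra F)),
      dag X hX c = m.f ≫ dag Y hY d) :
    ∃ h : (colimit (ObjectProperty.ι (Pffg T F))).V ⟶ A,
      ∀ (X : Type) (hX : Finite X) (c : T.free.obj X ⟶ F.obj (T.free.obj X)),
        (colimit.ι (ObjectProperty.ι (Pffg T F)) (ffgObj T F X hX c)).f ≫ h = dag X hX c := by
  let s : Cocone ((finFreeInclusion T F ⋙ ObjectProperty.ι (Pffg T F)) ⋙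
      Endofunctor.Coalgebra.forget F) :=
    { pt := A
      ι :=
        { app k := dag (Fin k.1) inferInstance k.2
          naturality _ _ f :=
            (hfunct _ _ _ _ _ _ f.hom.hom).symm.trans (Category.comp_id _).symm } }
  refine ⟨isColimitCarriers.desc s, fun X hX c => ?_⟩
  -- `ffgObj T F X hX c` is isomorphic to some `k : FinFree T F`, and both `colimit.ι` and `dag`
  -- are compatible with coalgebra morphisms.
  let k := (finFreeInclusion T F).objPreimage (ffgObj T F X hX c)
  let φ := (finFreeInclusion T F).objObjPreimageIso (ffgObj T F X hX c)
  have hι := congrArg Endofunctor.Coalgebra.Hom.f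
    (colimit.w (ObjectProperty.ι (Pffg T F)) φ.inv)
  have hk : _ = dag (Fin k.1) inferInstance k.2 := isColimitCarriers.fac s k
  exact ((congrArg (· ≫ isColimitCarriers.desc s) hι.symm).trans
    (Category.assoc _ _ _)).trans <|
    (congrArg (φ.inv.hom.f ≫ ·) hk).trans (hfunct _ _ _ _ _ _ φ.inv.hom).symm

end Pffg

theorem phiF_initial_ffgBloom_algebra_general
    (T : Monad (Type))
    (F : T.Algebra ⥤ T.Algebra)
    [HasColimit (ObjectProperty.ι (Pffg T F))]
    [IsIso (colimit (ObjectProperty.ι (Pffg T F))).str]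
    (A : T.Algebra) (a : F.obj A ⟶ A)
    (dag : ∀ (X : Type) (_ : Finite X)
      (c : T.free.obj X ⟶ F.obj (T.free.obj X)), T.free.obj X ⟶ A)
    (hsol : ∀ (X : Type) (hX : Finite X) (c : T.free.obj X ⟶ F.obj (T.free.obj X)),
      dag X hX c = c ≫ F.map (dag X hX c) ≫ a)
    (hfunct : ∀ (X Y : Type) (hX : Finite X) (hY : Finite Y)
      (c : T.free.obj X ⟶ F.obj (T.free.obj X))
      (d : T.free.obj Y ⟶ F.obj (T.free.obj Y))
      (m : (⟨T.free.obj X, c⟩ : Endofunctor.Coalgebra F) ⟶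
        (⟨T.free.obj Y, d⟩ : Endofunctor.Coalgebra F)),
      dag X hX c = m.f ≫ dag Y hY d) :
    -- φF with the colimit injections is itself an ffg-Bloom algebra:
    (∀ (X : Type) (hX : Finite X) (c : T.free.obj X ⟶ F.obj (T.free.obj X)),
      (colimit.ι (ObjectProperty.ι (Pffg T F)) (ffgObj T F X hX c)).f =
        c ≫ F.map (colimit.ι (ObjectProperty.ι (Pffg T F)) (ffgObj T F X hX c)).f ≫
          inv (colimit (ObjectProperty.ι (Pffg T F))).str) ∧
    (∀ (X Y : Type) (hX : Finite X) (hY : Finite Y)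
      (c : T.free.obj X ⟶ F.obj (T.free.obj X))
      (d : T.free.obj Y ⟶ F.obj (T.free.obj Y))
      (m : (⟨T.free.obj X, c⟩ : Endofunctor.Coalgebra F) ⟶
        (⟨T.free.obj Y, d⟩ : Endofunctor.Coalgebra F)),
      (colimit.ι (ObjectProperty.ι (Pffg T F)) (ffgObj T F X hX c)).f =
        m.f ≫ (colimit.ι (ObjectProperty.ι (Pffg T F)) (ffgObj T F Y hY d)).f) ∧
    -- and it is initial among ffg-Bloom algebras:
    ∃! h : (colimit (ObjectProperty.ι (Pffg T F))).V ⟶ A,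
      (colimit (ObjectProperty.ι (Pffg T F))).str ≫ F.map h ≫ a = h ∧
      ∀ (X : Type) (hX : Finite X) (c : T.free.obj X ⟶ F.obj (T.free.obj X)),
        (colimit.ι (ObjectProperty.ι (Pffg T F)) (ffgObj T F X hX c)).f ≫ h =
          dag X hX c := by
  refine ⟨fun X hX c => Endofunctor.Coalgebra.Hom.f_eq_str_comp_map_comp_inv _,
    fun X Y hX hY c d m => (congrArg Endofunctor.Coalgebra.Hom.f
      (colimit.w (ObjectProperty.ι (Pffg T F))
        (ObjectProperty.homMk m : ffgObj T F X hX c ⟶ ffgObj T F Y hY d))).symm, ?_⟩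
  obtain ⟨h, hh⟩ := Pffg.exists_carrier_desc dag hfunct
  refine ⟨h, ⟨Pffg.carrier_hom_ext fun X hX c => ?_, hh⟩,
    fun y hy => Pffg.carrier_hom_ext fun X hX c => (hy.2 X hX c).trans (hh X hX c).symm⟩
  set ι := colimit.ι (ObjectProperty.ι (Pffg T F)) (ffgObj T F X hX c)
  calc (ι.f ≫ (colimit (ObjectProperty.ι (Pffg T F))).str ≫ F.map h ≫ a :
        T.free.obj X ⟶ A)
      = c ≫ F.map ι.f ≫ F.map h ≫ a := (ι.h_assoc _).symm
    _ = c ≫ F.map (dag X hX c) ≫ a := congrArg (c ≫ ·) <|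
        (F.map_comp_assoc _ _ _).symm.trans (congrArg (fun g => F.map g ≫ a) (hh X hX c))
    _ = dag X hX c := (hsol X hX c).symm
    _ = (ι.f ≫ h : T.free.obj X ⟶ A) := (hh X hX c).symm

/-- `φF`, the colimit of all `F`-coalgebras with free finitely generated carrier,
whose structure is an isomorphism `ζ`, equipped with the colimit injections as solution
operation, is an ffg-Bloom algebra (solution and functoriality axioms hold), and it is the
initial one: for every ffg-Bloom algebra `(A, a, †)` there is a unique `F`-algebra morphism
`h : (φF, ζ⁻¹) ⟶ (A, a)` preserving solutions. -/
theorem phiF_initial_ffgBloom_algebra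
    (T : Monad (Type)) [PreservesFilteredColimits (T : Type ⥤ Type)]
    (F : T.Algebra ⥤ T.Algebra) [PreservesFilteredColimits F]
    (hsurj : ∀ {A B : T.Algebra} (f : A ⟶ B), Function.Surjective f.f →
      Function.Surjective (F.map f).f)
    (hsift : ∀ (J : Type) (_ : SmallCategory J) (_ : IsSifted J),
      Nonempty (PreservesColimitsOfShape J F))
    [HasColimit (ObjectProperty.ι (Pffg T F))]
    [IsIso (colimit (ObjectProperty.ι (Pffg T F))).str]
    (A : T.Algebra) (a : F.obj A ⟶ A)
    (dag : ∀ (X : Type) (_ : Finite X)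
      (c : T.free.obj X ⟶ F.obj (T.free.obj X)), T.free.obj X ⟶ A)
    (hsol : ∀ (X : Type) (hX : Finite X) (c : T.free.obj X ⟶ F.obj (T.free.obj X)),
      dag X hX c = c ≫ F.map (dag X hX c) ≫ a)
    (hfunct : ∀ (X Y : Type) (hX : Finite X) (hY : Finite Y)
      (c : T.free.obj X ⟶ F.obj (T.free.obj X))
      (d : T.free.obj Y ⟶ F.obj (T.free.obj Y))
      (m : (⟨T.free.obj X, c⟩ : Endofunctor.Coalgebra F) ⟶
        (⟨T.free.obj Y, d⟩ : Endofunctor.Coalgebra F)),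
      dag X hX c = m.f ≫ dag Y hY d) :
    -- φF with the colimit injections is itself an ffg-Bloom algebra:
    (∀ (X : Type) (hX : Finite X) (c : T.free.obj X ⟶ F.obj (T.free.obj X)),
      (colimit.ι (ObjectProperty.ι (Pffg T F)) (ffgObj T F X hX c)).f =
        c ≫ F.map (colimit.ι (ObjectProperty.ι (Pffg T F)) (ffgObj T F X hX c)).f ≫
          inv (colimit (ObjectProperty.ι (Pffg T F))).str) ∧
    (∀ (X Y : Type) (hX : Finite X) (hY : Finite Y)
      (c : T.free.obj X ⟶ F.obj (T.free.obj X))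
      (d : T.free.obj Y ⟶ F.obj (T.free.obj Y))
      (m : (⟨T.free.obj X, c⟩ : Endofunctor.Coalgebra F) ⟶
        (⟨T.free.obj Y, d⟩ : Endofunctor.Coalgebra F)),
      (colimit.ι (ObjectProperty.ι (Pffg T F)) (ffgObj T F X hX c)).f =
        m.f ≫ (colimit.ι (ObjectProperty.ι (Pffg T F)) (ffgObj T F Y hY d)).f) ∧
    -- and it is initial among ffg-Bloom algebras:
    ∃! h : (colimit (ObjectProperty.ι (Pffg T F))).V ⟶ A,
      (colimit (ObjectProperty.ι (Pffg T F))).str ≫ F.map h ≫ a = h ∧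
      ∀ (X : Type) (hX : Finite X) (c : T.free.obj X ⟶ F.obj (T.free.obj X)),
        (colimit.ι (ObjectProperty.ι (Pffg T F)) (ffgObj T F X hX c)).f ≫ h =
          dag X hX c :=
  phiF_initial_ffgBloom_algebra_general T F A a dag hsol hfunct
end

section
/- Under the same assumptions, if F is proper then the canonical strong epimorphism h : φF → ρF is an isomorphism; i.e., φF is the rational fixed point of F. -/
open CategoryTheory CategoryTheory.Limits

/-- Zig-zag relatedness of elements of coalgebras with free finitely generated
carrier. -/
def ZigzagRel (T : Monad (Type)) (F : T.Algebra ⥤ T.Algebra) :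
    (Σ C : ObjectProperty.FullSubcategory (Pffg T F), C.obj.V.A) →
      (Σ C : ObjectProperty.FullSubcategory (Pffg T F), C.obj.V.A) → Prop :=
  Relation.EqvGen (fun p q => ∃ m : p.1 ⟶ q.1, m.hom.f.f p.2 = q.2)

/-- Properness of `F` with respect to a final coalgebra `νF`. -/
def Proper (T : Monad (Type)) (F : T.Algebra ⥤ T.Algebra)
    (νF : Endofunctor.Coalgebra F) (hν : IsTerminal νF) : Prop :=
  ∀ (X Y : Type) (hX : Finite X) (hY : Finite Y)
    (c : T.free.obj X ⟶ F.obj (T.free.obj X))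
    (d : T.free.obj Y ⟶ F.obj (T.free.obj Y)) (x : X) (y : Y),
    (hν.from ⟨T.free.obj X, c⟩).f.f (T.η.app X x) =
      (hν.from ⟨T.free.obj Y, d⟩).f.f (T.η.app Y y) →
    ZigzagRel T F ⟨ffgObj T F X hX c, T.η.app X x⟩ ⟨ffgObj T F Y hY d, T.η.app Y y⟩

/-!
A coalgebra with finitely presentable carrier is a quotient of one with free finitely generated
carrier: its carrier is the filtered union of its finitely generated subalgebras, hence by finite
presentability equal to one of them, i.e. a quotient of a free algebra on a finite set; and the
coalgebra structure lifts along this quotient because `F` preserves surjections. Properness says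
that elements of free finitely generated coalgebras with the same image in `νF` are identified in
`φF`, so each colimit injection into `φF` from such a quotient map descends to its codomain.
These maps form a cocone over the diagram defining `ρF`, whose induced map is a retraction of
`h`; and `h` is epic because every object of that diagram is such a quotient.
-/

namespace ProperFixedPoint

variable {T : Monad (Type)}

attribute [local instance] Cardinal.fact_isRegular_aleph0

lemma homEquiv_symm_apply_η {X : Type} {B : T.Algebra} (g : X ⟶ B.A) (x : X) :
    ((T.adj.homEquiv X B).symm g).f (T.η.app X x) = g x := by
  have := (T.adj.homEquiv X B).apply_symm_apply g
  rw [Adjunction.homEquiv_unit] at this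
  exact ConcreteCategory.congr_hom this x

lemma free_hom_ext {X : Type} {B : T.Algebra} {u v : T.free.obj X ⟶ B}
    (h : ∀ x, u.f (T.η.app X x) = v.f (T.η.app X x)) : u = v :=
  (T.adj.homEquiv X B).injective (by ext x; exact h x)

lemma isFP_iff_isFinitelyPresentable (A : T.Algebra) :
    IsFP T A ↔ IsFinitelyPresentable.{0} A := by
  rw [isFinitelyPresentable_iff_preservesFilteredColimitsOfSize]
  exact ⟨fun h => ⟨fun J _ _ => (h J _ ‹_›).some⟩, fun _ J _ _ => ⟨inferInstance⟩⟩

lemma isFinitelyPresentable_free [PreservesFilteredColimits (T : Type ⥤ Type)]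
    (X : Type) [Finite X] : IsFinitelyPresentable.{0} (T.free.obj X) := by
  have : IsFinitelyPresentable.{0} X :=
    HasCardinalLT.isCardinalPresentable ((hasCardinalLT_aleph0_iff X).2 inferInstance)
  have : PreservesFilteredColimits T.forget := ⟨fun _ _ _ => inferInstance⟩
  have : T.forget.IsFinitelyAccessible :=
    Functor.isFinitelyAccessible_iff_preservesFilteredColimits.2 inferInstance
  exact T.adj.isCardinalPresentable_leftAdjoint_obj _ X

def algebraOfMono (A : T.Algebra) {B : Type} (m : B ⟶ A.A) [Mono m]
    (a : (T : Type ⥤ Type).obj B ⟶ B) (ha : a ≫ m = (T : Type ⥤ Type).map m ≫ A.a) :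
    T.Algebra where
  A := B
  a := a
  unit := by
    rw [← cancel_mono m, Category.assoc, ha, ← T.η.naturality_assoc, A.unit]
    rfl
  assoc := by
    rw [← cancel_mono m]
    simp only [Category.assoc, ha]
    rw [← T.μ.naturality_assoc, ← T.map_comp_assoc, ha, T.map_comp_assoc, A.assoc]
    rfl

instance {X : Type} (R : Set X) : Mono (TypeCat.ofHom (Subtype.val : R → X)) :=
  (mono_iff_injective _).2 Subtype.val_injective

def IsSubalgebra (A : T.Algebra) (R : Set A.A) : Prop :=
  ∀ t : (T : Type ⥤ Type).obj R,
    A.a ((T : Type ⥤ Type).map (TypeCat.ofHom (Subtype.val : R → A.A)) t) ∈ R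

lemma isSubalgebra_range {A B : T.Algebra} (f : B ⟶ A) : IsSubalgebra A (Set.range f.f) := by
  intro t
  choose s hs using fun r : Set.range f.f => r.2
  have hval : TypeCat.ofHom (Subtype.val : Set.range f.f → A.A) = TypeCat.ofHom s ≫ f.f := by
    ext r
    exact (hs r).symm
  rw [hval, Functor.map_comp]
  exact ⟨_, (ConcreteCategory.congr_hom f.h _).symm⟩

def subalgebra (A : T.Algebra) {R : Set A.A} (hR : IsSubalgebra A R) : T.Algebra :=
  algebraOfMono A (TypeCat.ofHom Subtype.val)
    (TypeCat.ofHom fun t => ⟨A.a ((T : Type ⥤ Type).map (TypeCat.ofHom Subtype.val) t), hR t⟩)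
    rfl

def subalgebraι (A : T.Algebra) {R : Set A.A} (hR : IsSubalgebra A R) : subalgebra A hR ⟶ A where
  f := TypeCat.ofHom Subtype.val
  h := rfl

instance (A : T.Algebra) {R : Set A.A} (hR : IsSubalgebra A R) : Mono (subalgebraι A hR).f :=
  inferInstanceAs (Mono (TypeCat.ofHom Subtype.val))

def subalgebraInclusion (A : T.Algebra) {R R' : Set A.A} (hR : IsSubalgebra A R)
    (hR' : IsSubalgebra A R') (h : R ⊆ R') : subalgebra A hR ⟶ subalgebra A hR' where
  f := TypeCat.ofHom (Set.inclusion h)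
  h := by
    rw [← cancel_mono (subalgebraι A hR').f, Category.assoc, ← (subalgebraι A hR').h,
      ← Functor.map_comp_assoc, Category.assoc]
    exact (subalgebraι A hR).h

def span (A : T.Algebra) (S : Finset A.A) : Set A.A :=
  Set.range ((T.adj.homEquiv S A).symm (TypeCat.ofHom Subtype.val)).f

lemma subset_span (A : T.Algebra) (S : Finset A.A) : (S : Set A.A) ⊆ span A S :=
  fun a ha => ⟨T.η.app S ⟨a, ha⟩, homEquiv_symm_apply_η _ _⟩

lemma span_mono (A : T.Algebra) {S S' : Finset A.A} (h : S ⊆ S') : span A S ⊆ span A S' := by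
  rintro _ ⟨t, rfl⟩
  refine ⟨(T.free.map (TypeCat.ofHom (Set.inclusion h))).f t, ?_⟩
  exact ConcreteCategory.congr_hom (congrArg Monad.Algebra.Hom.f
    (T.adj.homEquiv_naturality_left_symm (TypeCat.ofHom (Set.inclusion h))
      (TypeCat.ofHom Subtype.val))).symm t

def spanDiagram (A : T.Algebra) : Finset A.A ⥤ T.Algebra where
  obj S := subalgebra A (isSubalgebra_range _ : IsSubalgebra A (span A S))
  map h := subalgebraInclusion A _ _ (span_mono A (leOfHom h))

def spanCocone (A : T.Algebra) : Cocone (spanDiagram A) where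
  pt := A
  ι := { app := fun S => subalgebraι A _ }

noncomputable def isColimitSpanCocone [PreservesFilteredColimits (T : Type ⥤ Type)]
    (A : T.Algebra) : IsColimit (spanCocone A) := by
  refine isColimitOfReflects (Monad.forget T) (Types.FilteredColimit.isColimitOf' _ _ ?_ ?_)
  · intro a
    exact ⟨{a}, ⟨a, subset_span A {a} (Finset.mem_singleton_self a)⟩, rfl⟩
  · intro S x y hxy
    exact ⟨S, 𝟙 S, Subtype.ext hxy⟩

lemma exists_surjective_from_free [PreservesFilteredColimits (T : Type ⥤ Type)]
    (A : T.Algebra) [IsFinitelyPresentable.{0} A] :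
    ∃ (X : Type) (_ : Finite X) (e : T.free.obj X ⟶ A), Function.Surjective e.f := by
  obtain ⟨S, p, hp⟩ :=
    IsFinitelyPresentable.exists_hom_of_isColimit (isColimitSpanCocone A) (𝟙 A)
  refine ⟨S, inferInstance, (T.adj.homEquiv S A).symm (TypeCat.ofHom Subtype.val), fun a => ?_⟩
  have hpa : (p.f a).1 = a := (ConcreteCategory.congr_hom (congrArg Monad.Algebra.Hom.f hp) a :)
  exact hpa ▸ (p.f a).2

lemma exists_algebraHom_comp_eq_of_surjective {A B D : T.Algebra} (e : A ⟶ B)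
    (he : Function.Surjective e.f) (g : A ⟶ D) (hg : ∀ x y, e.f x = e.f y → g.f x = g.f y) :
    ∃ t : B ⟶ D, e ≫ t = g := by
  let t : B.A ⟶ D.A := TypeCat.ofHom (g.f ∘ Function.surjInv he)
  have het : e.f ≫ t = g.f := by
    ext x
    exact hg _ _ (Function.surjInv_eq he (e.f x))
  have : Epi e.f := (epi_iff_surjective _).2 he
  have : IsSplitEpi e.f := isSplitEpi_of_epi _
  refine ⟨⟨t, ?_⟩, Monad.Algebra.Hom.ext het⟩
  rw [← cancel_epi ((T : Type ⥤ Type).map e.f), ← Functor.map_comp_assoc, het, g.h,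
    e.h_assoc, het]

section Coalgebra

variable {F : T.Algebra ⥤ T.Algebra}

lemma pfp_of_pffg [PreservesFilteredColimits (T : Type ⥤ Type)] {C : Endofunctor.Coalgebra F}
    (hC : Pffg T F C) : Pfp T F C := by
  obtain ⟨X, hX, ⟨θ⟩⟩ := hC
  have := isFinitelyPresentable_free (T := T) X
  exact (isFP_iff_isFinitelyPresentable _).2 (isCardinalPresentable_of_iso θ.symm _)

lemma coalgebraHom_ext {V W : Endofunctor.Coalgebra F} {u v : V ⟶ W}
    (h : ∀ x, u.f.f x = v.f.f x) : u = v :=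
  Endofunctor.Coalgebra.Hom.ext (Monad.Algebra.Hom.ext (ConcreteCategory.hom_ext _ _ h))

lemma epi_of_surjective {V W : Endofunctor.Coalgebra F} (e : V ⟶ W)
    (he : Function.Surjective e.f.f) : Epi e :=
  have : Epi e.f.f := (epi_iff_surjective _).2 he
  have : Epi e.f := Monad.algebra_epi_of_epi _ e.f
  (Endofunctor.Coalgebra.forget F).epi_of_epi_map this

lemma exists_coalgebraHom_comp_eq_of_surjective {E C D : Endofunctor.Coalgebra F} (e : E ⟶ C)
    (he : Function.Surjective e.f.f) (g : E ⟶ D)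
    (hg : ∀ x y, e.f.f x = e.f.f y → g.f.f x = g.f.f y) : ∃ t : C ⟶ D, e ≫ t = g := by
  obtain ⟨t, ht⟩ := exists_algebraHom_comp_eq_of_surjective e.f he g.f hg
  have : Epi e.f := Monad.algebra_epi_of_epi _ e.f (h := (epi_iff_surjective _).2 he)
  refine ⟨⟨t, ?_⟩, Endofunctor.Coalgebra.Hom.ext ht⟩
  rw [← cancel_epi e.f, ← e.h_assoc, ← F.map_comp, ht, g.h, ← ht, Category.assoc]

def IsFfgQuotient (C : Endofunctor.Coalgebra F) : Prop :=
  ∃ (W : ObjectProperty.FullSubcategory (Pffg T F)) (e : W.obj ⟶ C), Function.Surjective e.f.f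

lemma isFfgQuotient_of_isFinitelyPresentable [PreservesFilteredColimits (T : Type ⥤ Type)]
    (hsurj : ∀ {A B : T.Algebra} (f : A ⟶ B), Function.Surjective f.f →
      Function.Surjective (F.map f).f)
    (C : Endofunctor.Coalgebra F) [IsFinitelyPresentable.{0} C.V] : IsFfgQuotient C := by
  obtain ⟨X, hX, e, he⟩ := exists_surjective_from_free C.V
  choose z hz using fun x => hsurj e he (C.str.f (e.f (T.η.app X x)))
  refine ⟨ffgObj T F X hX ((T.adj.homEquiv _ _).symm (TypeCat.ofHom z)),
    ⟨e, free_hom_ext fun x => ?_⟩, he⟩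
  exact (congrArg (F.map e).f (homEquiv_symm_apply_η _ x)).trans (hz x)

def coalgebraHomOfRetract {C : Type*} [Category C] {G : C ⥤ C} (D : Endofunctor.Coalgebra G)
    {A : C} (h : Retract D.V A) :
    (⟨A, h.r ≫ D.str ≫ G.map h.i⟩ : Endofunctor.Coalgebra G) ⟶ D where
  f := h.r
  h := by rw [Category.assoc, Category.assoc, ← G.map_comp, h.retract, G.map_id, Category.comp_id]

/-- Adjoin `a` as a new generator `none`; the old carrier is a retract of the new one. -/
lemma exists_hom_from_generator (c : ObjectProperty.FullSubcategory (Pffg T F)) (a : c.obj.V.A) :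
    ∃ (X : Type) (hX : Finite X) (str : T.free.obj X ⟶ F.obj (T.free.obj X)) (x : X)
      (m : (ffgObj T F X hX str).obj ⟶ c.obj), m.f.f (T.η.app X x) = a := by
  obtain ⟨X, hX, ⟨θ⟩⟩ := c.property
  let r : T.free.obj (Option X) ⟶ c.obj.V :=
    (T.adj.homEquiv _ _).symm (TypeCat.ofHom fun o => o.elim a fun x => θ.inv.f (T.η.app X x))
  have hr : T.free.map (TypeCat.ofHom some) ≫ r = θ.inv := by
    rw [← Adjunction.homEquiv_naturality_left_symm, Equiv.symm_apply_eq]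
    rfl
  let R : Retract c.obj.V (T.free.obj (Option X)) :=
    ⟨θ.hom ≫ T.free.map (TypeCat.ofHom some), r, by rw [Category.assoc, hr, θ.hom_inv_id]⟩
  exact ⟨Option X, inferInstance, _, none, coalgebraHomOfRetract c.obj R,
    homEquiv_symm_apply_η _ none⟩

lemma cocone_apply_eq_of_zigzagRel (s : Cocone (ObjectProperty.ι (Pffg T F)))
    {p q : Σ c : ObjectProperty.FullSubcategory (Pffg T F), c.obj.V.A} (h : ZigzagRel T F p q) :
    (s.ι.app p.1).f.f p.2 = (s.ι.app q.1).f.f q.2 := by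
  induction h with
  | rel p q hpq =>
    obtain ⟨m, hm⟩ := hpq
    rw [← hm]
    exact (ConcreteCategory.congr_hom (congrArg (fun u : _ ⟶ s.pt => u.f.f) (s.w m)) p.2).symm
  | refl => rfl
  | symm _ _ _ ih => exact ih.symm
  | trans _ _ _ _ _ ih₁ ih₂ => exact ih₁.trans ih₂

lemma epi_of_forall_isFfgQuotient [PreservesFilteredColimits (T : Type ⥤ Type)]
    [HasColimit (ObjectProperty.ι (Pffg T F))] [HasColimit (ObjectProperty.ι (Pfp T F))]
    (hcover : ∀ C : ObjectProperty.FullSubcategory (Pfp T F), IsFfgQuotient C.obj)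
    (h : colimit (ObjectProperty.ι (Pffg T F)) ⟶ colimit (ObjectProperty.ι (Pfp T F)))
    (hh : ∀ (c : ObjectProperty.FullSubcategory (Pffg T F)) (hc : Pfp T F c.obj),
      colimit.ι (ObjectProperty.ι (Pffg T F)) c ≫ h =
        colimit.ι (ObjectProperty.ι (Pfp T F)) ⟨c.obj, hc⟩) :
    Epi h := by
  refine ⟨fun u v huv => colimit.hom_ext fun C => ?_⟩
  obtain ⟨W, e, he⟩ := hcover C
  have := epi_of_surjective e he
  have hW := pfp_of_pffg W.property
  have hι : e ≫ colimit.ι (ObjectProperty.ι (Pfp T F)) C =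
      colimit.ι (ObjectProperty.ι (Pffg T F)) W ≫ h :=
    (colimit.w _ (ObjectProperty.homMk e : ⟨W.obj, hW⟩ ⟶ C)).trans (hh W hW).symm
  rw [← cancel_epi e, ← Category.assoc, hι, Category.assoc, huv, ← Category.assoc, ← hι,
    Category.assoc]

end Coalgebra

section Proper

variable {F : T.Algebra ⥤ T.Algebra} {νF : Endofunctor.Coalgebra F} (hν : IsTerminal νF)

lemma from_apply_hom {V W : Endofunctor.Coalgebra F} (g : V ⟶ W) (v : V.V.A) :
    (hν.from W).f.f (g.f.f v) = (hν.from V).f.f v := by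
  rw [← hν.comp_from g]
  rfl

lemma zigzagRel_of_from_eq (hproper : Proper T F νF hν)
    {c d : ObjectProperty.FullSubcategory (Pffg T F)} {a : c.obj.V.A} {b : d.obj.V.A}
    (hab : (hν.from c.obj).f.f a = (hν.from d.obj).f.f b) :
    ZigzagRel T F ⟨c, a⟩ ⟨d, b⟩ := by
  obtain ⟨X, hX, str, x, m, rfl⟩ := exists_hom_from_generator c a
  obtain ⟨Y, hY, str', y, m', rfl⟩ := exists_hom_from_generator d b
  have hxy := (from_apply_hom hν m _).symm.trans (hab.trans (from_apply_hom hν m' _))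
  exact ((Relation.EqvGen.rel _ _ ⟨ObjectProperty.homMk m, rfl⟩).symm _ _).trans _ _ _
    ((hproper X Y hX hY str str' x y hxy).trans _ _ _
      (Relation.EqvGen.rel _ _ ⟨ObjectProperty.homMk m', rfl⟩))

lemma colimit_ι_apply_eq_of_from_eq (hproper : Proper T F νF hν)
    [HasColimit (ObjectProperty.ι (Pffg T F))]
    {c d : ObjectProperty.FullSubcategory (Pffg T F)} {a : c.obj.V.A} {b : d.obj.V.A}
    (hab : (hν.from c.obj).f.f a = (hν.from d.obj).f.f b) :
    (colimit.ι (ObjectProperty.ι (Pffg T F)) c).f.f a =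
      (colimit.ι (ObjectProperty.ι (Pffg T F)) d).f.f b :=
  cocone_apply_eq_of_zigzagRel (colimit.cocone _) (zigzagRel_of_from_eq hν hproper hab)

/-- By properness the colimit injection of a surjective cover of `C` is constant on its fibres,
so it descends to `C`. -/
lemma existsUnique_hom_colimit (hproper : Proper T F νF hν)
    [HasColimit (ObjectProperty.ι (Pffg T F))] (C : Endofunctor.Coalgebra F)
    (hC : IsFfgQuotient C) :
    ∃! l : C ⟶ colimit (ObjectProperty.ι (Pffg T F)),
      ∀ (W : ObjectProperty.FullSubcategory (Pffg T F)) (g : W.obj ⟶ C),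
        g ≫ l = colimit.ι (ObjectProperty.ι (Pffg T F)) W := by
  obtain ⟨E, e, he⟩ := hC
  obtain ⟨l, hl⟩ := exists_coalgebraHom_comp_eq_of_surjective e he
    (colimit.ι (ObjectProperty.ι (Pffg T F)) E : E.obj ⟶ _)
    fun x y hxy => colimit_ι_apply_eq_of_from_eq hν hproper
      ((from_apply_hom hν e x).symm.trans ((congrArg _ hxy).trans (from_apply_hom hν e y)))
  have := epi_of_surjective e he
  refine ⟨l, fun W g => coalgebraHom_ext fun w => ?_, fun l' hl' => by
    rw [← cancel_epi e, hl' E e, hl]⟩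
  obtain ⟨x, hx⟩ := he (g.f.f w)
  change l.f.f (g.f.f w) = _
  rw [← hx]
  refine (congrArg (fun u : E.obj ⟶ _ => u.f.f x) hl).trans
    (colimit_ι_apply_eq_of_from_eq hν hproper ?_)
  rw [← from_apply_hom hν e x, hx, from_apply_hom hν g w]

lemma isSplitMono_of_proper (hproper : Proper T F νF hν)
    [PreservesFilteredColimits (T : Type ⥤ Type)]
    [HasColimit (ObjectProperty.ι (Pffg T F))] [HasColimit (ObjectProperty.ι (Pfp T F))]
    (hcover : ∀ C : ObjectProperty.FullSubcategory (Pfp T F), IsFfgQuotient C.obj)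
    (h : colimit (ObjectProperty.ι (Pffg T F)) ⟶ colimit (ObjectProperty.ι (Pfp T F)))
    (hh : ∀ (c : ObjectProperty.FullSubcategory (Pffg T F)) (hc : Pfp T F c.obj),
      colimit.ι (ObjectProperty.ι (Pffg T F)) c ≫ h =
        colimit.ι (ObjectProperty.ι (Pfp T F)) ⟨c.obj, hc⟩) :
    IsSplitMono h := by
  choose l hl huniq using fun C : ObjectProperty.FullSubcategory (Pfp T F) =>
    existsUnique_hom_colimit hν hproper C.obj (hcover C)
  let k : colimit (ObjectProperty.ι (Pfp T F)) ⟶ colimit (ObjectProperty.ι (Pffg T F)) :=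
    colimit.desc _
      { pt := _
        ι :=
          { app := l
            naturality := fun C C' f => by
              simpa using huniq C (f.hom ≫ l C') fun W g => by
                simpa using hl C' W (g ≫ f.hom) } }
  refine ⟨⟨k, colimit.hom_ext fun c => ?_⟩⟩
  have hc := pfp_of_pffg c.property
  rw [Category.comp_id, ← Category.assoc, hh c hc, colimit.ι_desc]
  simpa using hl ⟨c.obj, hc⟩ c (𝟙 c.obj)

end Proper

end ProperFixedPoint

open ProperFixedPoint

theorem proper_implies_phiF_iso_rhoF_general
    (T : Monad (Type)) [PreservesFilteredColimits (T : Type ⥤ Type)]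
    (F : T.Algebra ⥤ T.Algebra)
    (hsurj : ∀ {A B : T.Algebra} (f : A ⟶ B), Function.Surjective f.f →
      Function.Surjective (F.map f).f)
    [HasColimit (ObjectProperty.ι (Pffg T F))]
    [HasColimit (ObjectProperty.ι (Pfp T F))]
    (νF : Endofunctor.Coalgebra F) (hν : IsTerminal νF)
    (hproper : Proper T F νF hν)
    (h : colimit (ObjectProperty.ι (Pffg T F)) ⟶
        colimit (ObjectProperty.ι (Pfp T F)))
    (hh : ∀ (c : ObjectProperty.FullSubcategory (Pffg T F)) (hc : Pfp T F c.obj),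
      colimit.ι (ObjectProperty.ι (Pffg T F)) c ≫ h =
        colimit.ι (ObjectProperty.ι (Pfp T F)) ⟨c.obj, hc⟩) :
    IsIso h := by
  have hcover (C : ObjectProperty.FullSubcategory (Pfp T F)) : IsFfgQuotient C.obj :=
    have := (isFP_iff_isFinitelyPresentable _).1 C.property
    isFfgQuotient_of_isFinitelyPresentable hsurj C.obj
  have := epi_of_forall_isFfgQuotient hcover h hh
  have := isSplitMono_of_proper hν hproper hcover h hh
  exact isIso_of_epi_of_isSplitMono h

/-- If `F` is proper then the canonical (strongly epimorphic) coalgebra morphism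
`h : φF ⟶ ρF` is an isomorphism; i.e. `φF` is the rational fixed point of `F`. -/
theorem proper_implies_phiF_iso_rhoF
    (T : Monad (Type)) [PreservesFilteredColimits (T : Type ⥤ Type)]
    (F : T.Algebra ⥤ T.Algebra) [PreservesFilteredColimits F]
    (hsurj : ∀ {A B : T.Algebra} (f : A ⟶ B), Function.Surjective f.f →
      Function.Surjective (F.map f).f)
    (hsift : ∀ (J : Type) (_ : SmallCategory J) (_ : IsSifted J),
      Nonempty (PreservesColimitsOfShape J F))
    [HasColimit (ObjectProperty.ι (Pffg T F))]
    [HasColimit (ObjectProperty.ι (Pfp T F))]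
    (νF : Endofunctor.Coalgebra F) (hν : IsTerminal νF)
    (hproper : Proper T F νF hν)
    (h : colimit (ObjectProperty.ι (Pffg T F)) ⟶
        colimit (ObjectProperty.ι (Pfp T F)))
    (hh : ∀ (c : ObjectProperty.FullSubcategory (Pffg T F)) (hc : Pfp T F c.obj),
      colimit.ι (ObjectProperty.ι (Pffg T F)) c ≫ h =
        colimit.ι (ObjectProperty.ι (Pfp T F)) ⟨c.obj, hc⟩) :
    IsIso h :=
  proper_implies_phiF_iso_rhoF_general T F hsurj νF hν hproper h hh
end

section
/- Let T be a finitary monad on Set and F : Set^T ⥤ Set^T a proper, finitary endofunctor preserving surjective morphisms and sifted colimits. Suppose (R, r) is an F-coalgebra that is a filtered colimit of coalgebras with finitely presentable carrier and such that for every coalgebra c : TX → F(TX) with X finite there is a unique coalgebra morphism TX → R. Then for every F-coalgebra (A, a) with finitely presentable carrier there is a unique coalgebra morphism A → R; i.e., R is the final locally finitely presentable coalgebra. -/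
open CategoryTheory CategoryTheory.Limits

/-!
A coalgebra `A` with finitely presentable carrier is a quotient `e : TX ↠ A` of a free finitely
generated algebra (span of a finite subset; this is where finite presentability is used), and
since `F` preserves surjections and free algebras are projective, `e` lifts to a coalgebra
morphism from some `(TX, c)`. The unique morphism `h : TX → R` factors through `e` as soon as
`h` identifies everything that `e` identifies. If `e t = e t'`, then `t` and `t'` have the same
image in the final coalgebra, so by properness they are related by a zig-zag of coalgebras with
free finitely generated carrier; the unique morphisms into `R` form a cocone over these, hence
`h t = h t'`. Uniqueness holds because `e` is epi.
-/

namespace CategoryTheory.Monad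

variable {T : Monad (Type)}

theorem map_surjective {X Y : Type} {u : X ⟶ Y} (hu : Function.Surjective u) :
    Function.Surjective (T.map u) := by
  have : Epi u := (epi_iff_surjective u).2 hu
  have : IsSplitEpi u := isSplitEpi_of_epi u
  exact (epi_iff_surjective _).1 inferInstance

theorem adj_homEquiv_symm_η_apply (A : T.Algebra) {X : Type} (u : X ⟶ A.A) (x : X) :
    ((T.adj.homEquiv X A).symm u).f (T.η.app X x) = u x :=
  ConcreteCategory.congr_hom ((T.adj.homEquiv X A).apply_symm_apply u) x

theorem Algebra.epi_of_surjective {A B : T.Algebra} (e : A ⟶ B) (he : Function.Surjective e.f) :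
    Epi e :=
  have : Epi e.f := (epi_iff_surjective _).2 he
  algebra_epi_of_epi T e

theorem exists_lift_of_surjective {A B : T.Algebra} {X : Type} (p : A ⟶ B)
    (hp : Function.Surjective p.f) (g : T.free.obj X ⟶ B) :
    ∃ l : T.free.obj X ⟶ A, l ≫ p = g := by
  choose u hu using fun x => hp (g.f (T.η.app X x))
  refine ⟨(T.adj.homEquiv X A).symm (TypeCat.ofHom u), ?_⟩
  rw [← Adjunction.homEquiv_naturality_right_symm, Equiv.symm_apply_eq]
  exact ConcreteCategory.hom_ext _ _ hu

theorem exists_factor_of_surjective {A B C : T.Algebra} (e : B ⟶ A)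
    (he : Function.Surjective e.f) (h : B ⟶ C) (hker : ∀ t t', e.f t = e.f t' → h.f t = h.f t') :
    ∃ k : A ⟶ C, e ≫ k = h := by
  let k₀ : A.A ⟶ C.A := TypeCat.ofHom fun a => h.f (Function.surjInv he a)
  have hk₀ : e.f ≫ k₀ = h.f :=
    ConcreteCategory.hom_ext _ _ fun t => hker _ _ (Function.surjInv_eq he (e.f t))
  have : Epi (T.map e.f) := (epi_iff_surjective _).2 (map_surjective he)
  refine ⟨⟨k₀, ?_⟩, Algebra.Hom.ext hk₀⟩
  rw [← cancel_epi (T.map e.f), ← Functor.map_comp_assoc, hk₀, h.h, e.h_assoc, hk₀]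

namespace Algebra

variable (A : T.Algebra)

def IsSubalgebra (s : Set A.A) : Prop :=
  ∀ t : T.obj s, A.a (T.map (TypeCat.ofHom Subtype.val) t) ∈ s

theorem isSubalgebra_range {B : T.Algebra} (g : B ⟶ A) : IsSubalgebra A (Set.range g.f) := by
  intro t
  obtain ⟨w, rfl⟩ := map_surjective (u := TypeCat.ofHom (Set.rangeFactorization g.f))
    Set.rangeFactorization_surjective t
  refine ⟨B.a w, ?_⟩
  rw [← Functor.map_comp_apply]
  exact (ConcreteCategory.congr_hom g.h w).symm

variable {A}

def subalgebraStr {s : Set A.A} (hs : IsSubalgebra A s) : T.obj s ⟶ s :=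
  TypeCat.ofHom fun t => ⟨_, hs t⟩

theorem subalgebraStr_val {s : Set A.A} (hs : IsSubalgebra A s) :
    subalgebraStr hs ≫ TypeCat.ofHom Subtype.val = T.map (TypeCat.ofHom Subtype.val) ≫ A.a :=
  rfl

def subalgebra {s : Set A.A} (hs : IsSubalgebra A s) : T.Algebra where
  A := s
  a := subalgebraStr hs
  unit := by
    have : Mono (TypeCat.ofHom (Subtype.val : s → A.A)) :=
      (mono_iff_injective _).2 Subtype.val_injective
    rw [← cancel_mono (TypeCat.ofHom (Subtype.val : s → A.A)), Category.assoc, subalgebraStr_val,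
      ← T.η.naturality_assoc, A.unit]
    rfl
  assoc := by
    have : Mono (TypeCat.ofHom (Subtype.val : s → A.A)) :=
      (mono_iff_injective _).2 Subtype.val_injective
    rw [← cancel_mono (TypeCat.ofHom (Subtype.val : s → A.A)), Category.assoc, Category.assoc,
      subalgebraStr_val, ← T.μ.naturality_assoc, ← Functor.map_comp_assoc, subalgebraStr_val,
      Functor.map_comp_assoc, ← A.assoc]
    rfl

variable {s s' : Set A.A} (hs : IsSubalgebra A s) (hs' : IsSubalgebra A s')

def subalgebraι : subalgebra hs ⟶ A where
  f := TypeCat.ofHom Subtype.val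
  h := (subalgebraStr_val hs).symm

def subalgebraInclusion (h : s ⊆ s') : subalgebra hs ⟶ subalgebra hs' where
  f := TypeCat.ofHom (Set.inclusion h)
  h := by
    ext t
    exact Subtype.ext (congrArg A.a (Functor.map_comp_apply ..).symm)

variable (A) in
def span (S : Finset A.A) : Set A.A :=
  Set.range ((T.adj.homEquiv S A).symm (TypeCat.ofHom Subtype.val)).f

theorem mem_span_of_mem {S : Finset A.A} {x : A.A} (hx : x ∈ S) : x ∈ span A S :=
  ⟨T.η.app S ⟨x, hx⟩, adj_homEquiv_symm_η_apply A _ _⟩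

theorem span_mono {S S' : Finset A.A} (h : S ⊆ S') : span A S ⊆ span A S' := by
  rintro _ ⟨t, rfl⟩
  have hfac : T.free.map (TypeCat.ofHom fun x : S => (⟨x.1, h x.2⟩ : S')) ≫
      (T.adj.homEquiv S' A).symm (TypeCat.ofHom Subtype.val) =
        (T.adj.homEquiv S A).symm (TypeCat.ofHom Subtype.val) := by
    rw [← Adjunction.homEquiv_naturality_left_symm]
    rfl
  exact ⟨_, ConcreteCategory.congr_hom (congrArg Algebra.Hom.f hfac) t⟩

variable (A) in
def spanDiagram : Finset A.A ⥤ T.Algebra where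
  obj S := subalgebra (isSubalgebra_range A _ : IsSubalgebra A (span A S))
  map h := subalgebraInclusion _ _ (span_mono (leOfHom h))

variable (A) in
def spanCocone : Cocone (spanDiagram A) where
  pt := A
  ι := { app S := subalgebraι _ }

variable (A) in
noncomputable def spanCoconeIsColimit [PreservesFilteredColimits (T : Type ⥤ Type)] :
    IsColimit (spanCocone A) := by
  classical
  refine isColimitOfReflects (Monad.forget T) (Types.FilteredColimit.isColimitOf _ _ ?_ ?_)
  · intro x
    exact ⟨{x}, ⟨x, mem_span_of_mem (Finset.mem_singleton_self x)⟩, rfl⟩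
  · intro S S' x x' hx
    exact ⟨S ⊔ S', homOfLE le_sup_left, homOfLE le_sup_right, Subtype.ext hx⟩

end Algebra

theorem exists_surjective_free_of_isFP [PreservesFilteredColimits (T : Type ⥤ Type)]
    (A : T.Algebra) (hA : IsFP T A) :
    ∃ (X : Type) (_ : Finite X) (e : T.free.obj X ⟶ A), Function.Surjective e.f := by
  classical
  obtain ⟨_⟩ := hA (Finset A.A) inferInstance inferInstance
  obtain ⟨S, f, hf⟩ := Types.jointly_surjective _
    (isColimitOfPreserves (coyoneda.obj (Opposite.op A)) (Algebra.spanCoconeIsColimit A)) (𝟙 A)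
  refine ⟨S, inferInstance, (T.adj.homEquiv S A).symm (TypeCat.ofHom Subtype.val), fun x => ?_⟩
  have hf : f ≫ Algebra.subalgebraι _ = 𝟙 A := hf
  have hx : (f ≫ Algebra.subalgebraι _).f x = x :=
    ConcreteCategory.congr_hom (congrArg Algebra.Hom.f hf) x
  rw [← hx]
  exact (f.f x).2

end CategoryTheory.Monad

namespace CategoryTheory.Endofunctor.Coalgebra

variable {T : Monad (Type)} {F : T.Algebra ⥤ T.Algebra}

theorem epi_of_surjective {A B : Coalgebra F} (e : A ⟶ B) (he : Function.Surjective e.f.f) :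
    Epi e :=
  have := Monad.Algebra.epi_of_surjective e.f he
  (forget F).epi_of_epi_map this

theorem exists_factor_of_surjective {A B R : Coalgebra F} (e : B ⟶ A)
    (he : Function.Surjective e.f.f) (h : B ⟶ R)
    (hker : ∀ t t', e.f.f t = e.f.f t' → h.f.f t = h.f.f t') : ∃ k : A ⟶ R, e ≫ k = h := by
  obtain ⟨k, hk⟩ := Monad.exists_factor_of_surjective e.f he h.f hker
  have := Monad.Algebra.epi_of_surjective e.f he
  refine ⟨⟨k, ?_⟩, Hom.ext hk⟩
  rw [← cancel_epi e.f, ← e.h_assoc, ← F.map_comp, hk, h.h, ← hk, Category.assoc]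

/-- Properness only speaks about generators; this makes arbitrary elements `v y` generators of a
covering coalgebra. -/
theorem exists_free_cover_with_points
    (hsurj : ∀ {A B : T.Algebra} (f : A ⟶ B), Function.Surjective f.f →
      Function.Surjective (F.map f).f)
    {X Y : Type} (c : T.free.obj X ⟶ F.obj (T.free.obj X)) (v : Y → (T.free.obj X).A) :
    ∃ (c' : T.free.obj (X ⊕ Y) ⟶ F.obj (T.free.obj (X ⊕ Y)))
      (p : (⟨_, c'⟩ : Coalgebra F) ⟶ ⟨_, c⟩), ∀ y, p.f.f (T.η.app _ (Sum.inr y)) = v y := by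
  let p := (T.adj.homEquiv (X ⊕ Y) (T.free.obj X)).symm
    (TypeCat.ofHom (Sum.elim (T.η.app X) v : X ⊕ Y → (T.free.obj X).A))
  have hsection : T.free.map (TypeCat.ofHom Sum.inl) ≫ p = 𝟙 _ := by
    rw [← Adjunction.homEquiv_naturality_left_symm, Equiv.symm_apply_eq]
    rfl
  have hp : Function.Surjective p.f := fun t =>
    ⟨_, ConcreteCategory.congr_hom (congrArg Monad.Algebra.Hom.f hsection) t⟩
  obtain ⟨c', hc'⟩ := Monad.exists_lift_of_surjective (F.map p) (hsurj p hp) (p ≫ c)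
  exact ⟨c', ⟨p, hc'⟩, fun y => Monad.adj_homEquiv_symm_η_apply _ _ _⟩

end CategoryTheory.Endofunctor.Coalgebra

open Endofunctor

section Finality

variable {T : Monad (Type)} {F : T.Algebra ⥤ T.Algebra}

theorem ZigzagRel.cocone_ι_app_eq (s : Cocone (ObjectProperty.ι (Pffg T F)))
    {p q : Σ C : ObjectProperty.FullSubcategory (Pffg T F), C.obj.V.A} (h : ZigzagRel T F p q) :
    (s.ι.app p.1).f.f p.2 = (s.ι.app q.1).f.f q.2 := by
  induction h with
  | rel p q hpq =>
    obtain ⟨m, hm⟩ := hpq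
    rw [← s.w m, ← hm]
    rfl
  | refl => rfl
  | symm _ _ _ ih => exact ih.symm
  | trans _ _ _ _ _ ih₁ ih₂ => exact ih₁.trans ih₂

theorem existsUnique_hom_of_pffg {R : Coalgebra F}
    (huniq : ∀ (X : Type) (_ : Finite X) (c : T.free.obj X ⟶ F.obj (T.free.obj X)),
      ∃! _ : (⟨T.free.obj X, c⟩ : Coalgebra F) ⟶ R, True)
    (C : ObjectProperty.FullSubcategory (Pffg T F)) : ∃! _ : C.obj ⟶ R, True := by
  obtain ⟨X, hX, ⟨i⟩⟩ := C.property
  let j : C.obj ≅ ⟨T.free.obj X, i.inv ≫ C.obj.str ≫ F.map i.hom⟩ := Coalgebra.isoMk i (by simp)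
  obtain ⟨m, -, hm⟩ := huniq X hX _
  exact ⟨j.hom ≫ m, trivial, fun y _ => by rw [← hm (j.inv ≫ y) trivial, Iso.hom_inv_id_assoc]⟩

noncomputable def pffgCoconeOfUnique {R : Coalgebra F}
    (huniq : ∀ (X : Type) (_ : Finite X) (c : T.free.obj X ⟶ F.obj (T.free.obj X)),
      ∃! _ : (⟨T.free.obj X, c⟩ : Coalgebra F) ⟶ R, True) :
    Cocone (ObjectProperty.ι (Pffg T F)) where
  pt := R
  ι :=
    { app C := (existsUnique_hom_of_pffg huniq C).exists.choose
      naturality _ _ _ := (existsUnique_hom_of_pffg huniq _).unique trivial trivial }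

theorem Proper.cocone_ι_app_eq {νF : Coalgebra F} {hν : IsTerminal νF}
    (hproper : Proper T F νF hν)
    (hsurj : ∀ {A B : T.Algebra} (f : A ⟶ B), Function.Surjective f.f →
      Function.Surjective (F.map f).f)
    (s : Cocone (ObjectProperty.ι (Pffg T F))) {X : Type} (hX : Finite X)
    (c : T.free.obj X ⟶ F.obj (T.free.obj X)) {t t' : (T.free.obj X).A}
    (h : (hν.from ⟨_, c⟩).f.f t = (hν.from ⟨_, c⟩).f.f t') :
    (s.ι.app (ffgObj T F X hX c)).f.f t = (s.ι.app (ffgObj T F X hX c)).f.f t' := by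
  obtain ⟨c', p, hp⟩ :=
    Coalgebra.exists_free_cover_with_points hsurj c (fun b : Bool => cond b t t')
  have hpoints : ∀ {R : Coalgebra F} (g : (⟨_, c'⟩ : Coalgebra F) ⟶ R) (g₀ : ⟨_, c⟩ ⟶ R),
      g = p ≫ g₀ → ∀ b, g.f.f (T.η.app _ (Sum.inr b)) = g₀.f.f (cond b t t') := by
    rintro R g g₀ rfl b
    exact congrArg g₀.f.f (hp b)
  have hν' := hpoints (hν.from _) (hν.from _) (hν.hom_ext _ _)
  have hs := hpoints (s.ι.app (ffgObj T F (X ⊕ Bool) inferInstance c')) (s.ι.app (ffgObj T F X hX c))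
    (s.w (ObjectProperty.homMk (X := ffgObj T F (X ⊕ Bool) inferInstance c')
      (Y := ffgObj T F X hX c) p)).symm
  have hz := hproper _ _ inferInstance inferInstance c' c' (Sum.inr true) (Sum.inr false)
    ((hν' true).trans (h.trans (hν' false).symm))
  exact (hs true).symm.trans ((hz.cocone_ι_app_eq s).trans (hs false))

end Finality

theorem proper_finality_check_on_ffg_suffices_general
    (T : Monad (Type)) [PreservesFilteredColimits (T : Type ⥤ Type)]
    (F : T.Algebra ⥤ T.Algebra)
    (hsurj : ∀ {A B : T.Algebra} (f : A ⟶ B), Function.Surjective f.f →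
      Function.Surjective (F.map f).f)
    (νF : Endofunctor.Coalgebra F) (hν : IsTerminal νF)
    (hproper : Proper T F νF hν)
    (J : Type) [SmallCategory J]
    (DJ : J ⥤ Endofunctor.Coalgebra F)
    (cc : Cocone DJ)
    (huniq : ∀ (X : Type) (_ : Finite X)
      (c : T.free.obj X ⟶ F.obj (T.free.obj X)),
      ∃! _ : (⟨T.free.obj X, c⟩ : Endofunctor.Coalgebra F) ⟶ cc.pt, True) :
    ∀ A : Endofunctor.Coalgebra F, IsFP T A.V → ∃! _ : A ⟶ cc.pt, True := by
  intro A hA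
  obtain ⟨X, hX, e, he⟩ := Monad.exists_surjective_free_of_isFP A.V hA
  obtain ⟨c, hc⟩ := Monad.exists_lift_of_surjective (F.map e) (hsurj e he) (e ≫ A.str)
  let ec : (⟨T.free.obj X, c⟩ : Coalgebra F) ⟶ A := ⟨e, hc⟩
  obtain ⟨h, -, h_unique⟩ := huniq X hX c
  have hker : ∀ t t', e.f t = e.f t' → h.f.f t = h.f.f t' := fun t t' het => by
    have hs : (pffgCoconeOfUnique huniq).ι.app (ffgObj T F X hX c) = h := h_unique _ trivial
    rw [← hs]
    refine hproper.cocone_ι_app_eq hsurj _ hX c ?_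
    rw [show hν.from ⟨_, c⟩ = ec ≫ hν.from A from hν.hom_ext _ _]
    exact congrArg (hν.from A).f.f het
  obtain ⟨k, hk⟩ := Coalgebra.exists_factor_of_surjective ec he h hker
  have := Coalgebra.epi_of_surjective ec he
  exact ⟨k, trivial, fun y _ => (cancel_epi ec).1 ((h_unique _ trivial).trans hk.symm)⟩

/-- For a proper functor `F`, a coalgebra `R` which is a filtered colimit of coalgebras
with finitely presentable carrier and which admits a unique coalgebra morphism from
every coalgebra with free finitely generated carrier, admits a unique coalgebra
morphism from every coalgebra with finitely presentable carrier; i.e. `R` is the final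
locally finitely presentable coalgebra. -/
theorem proper_finality_check_on_ffg_suffices
    (T : Monad (Type)) [PreservesFilteredColimits (T : Type ⥤ Type)]
    (F : T.Algebra ⥤ T.Algebra) [PreservesFilteredColimits F]
    (hsurj : ∀ {A B : T.Algebra} (f : A ⟶ B), Function.Surjective f.f →
      Function.Surjective (F.map f).f)
    (hsift : ∀ (J : Type) (_ : SmallCategory J) (_ : IsSifted J),
      Nonempty (PreservesColimitsOfShape J F))
    [HasColimit (ObjectProperty.ι (Pffg T F))]
    (νF : Endofunctor.Coalgebra F) (hν : IsTerminal νF)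
    (hproper : Proper T F νF hν)
    (J : Type) [SmallCategory J] [IsFiltered J]
    (DJ : J ⥤ Endofunctor.Coalgebra F) (hDJ : ∀ j : J, IsFP T (DJ.obj j).V)
    (cc : Cocone DJ) (hcc : Nonempty (IsColimit cc))
    (huniq : ∀ (X : Type) (_ : Finite X)
      (c : T.free.obj X ⟶ F.obj (T.free.obj X)),
      ∃! _ : (⟨T.free.obj X, c⟩ : Endofunctor.Coalgebra F) ⟶ cc.pt, True) :
    ∀ A : Endofunctor.Coalgebra F, IsFP T A.V → ∃! _ : A ⟶ cc.pt, True :=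
  proper_finality_check_on_ffg_suffices_general T F hsurj νF hν hproper J DJ cc huniq
end
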